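/- arXiv:1410.2141 — 7 statements merged into one kernel-verified Lean document; each statement's English description precedes it below -/
import Mathlib

section
/- Let α_k (k ≥ 1) be the decay operator on Y = Z_2[y_0, y_1, ...] and let α_k^* be the fusion operator defined on a monomial y^e by α_k^*(y^e) = 0 if e_{k-1} ≤ 1, and α_k^*(y^e) = y_{k-1}^{e_{k-1}-2} y_k^{e_k+1} ∏_{i ≠ k-1, k} y_i^{e_i} if e_{k-1} ≥ 2, extended Z_2-linearly. Then for distinct positive integers i ≠ j, the operators α_i^* and α_j commute: α_i^* α_j = α_j α_i^*. -/
open MvPolynomial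

/-- `Y = Z_2[y_0, y_1, y_2, ...]`. -/
abbrev Ypoly := MvPolynomial ℕ (ZMod 2)

/-!
In characteristic 2 squares are constants for every derivation, so `α_j` commutes with
multiplication by `y_{i-1}^2`, and also with multiplication by `y_i` since `i ≠ j`. Every
monomial is either `y_{i-1}^2 q`, on which `α_i^*` is multiplication of `q` by `y_i`, or has
`y_{i-1}`-exponent at most one, where `α_i^*` vanishes. The second kind spans a subspace that
`α_j` preserves, because `α_j` never raises the exponent of `y_{i-1}` when `j - 1 ≠ i - 1`.
-/

theorem Derivation.map_sq_eq_zero {R A : Type*} [CommSemiring R] [CommSemiring A] [Algebra R A]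
    [CharP A 2] (D : Derivation R A A) (x : A) : D (x ^ 2) = 0 := by
  rw [D.leibniz_pow, two_nsmul, CharTwo.add_self_eq_zero]

namespace MvPolynomial

variable {σ R : Type*} [CommSemiring R]

theorem derivation_eq_smul_pderiv (D : Derivation R (MvPolynomial σ R) (MvPolynomial σ R))
    (j : σ) (hD : ∀ k, k ≠ j → D (X k) = 0) : D = D (X j) • pderiv j := by
  classical
  refine derivation_ext fun k ↦ ?_
  rw [Derivation.smul_apply, pderiv_X, smul_eq_mul]
  rcases eq_or_ne k j with rfl | hk
  · simp
  · simp [hD k hk, Pi.single_eq_of_ne hk]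

section Decay

variable {D : Derivation R (MvPolynomial σ R) (MvPolynomial σ R)} {j j' : σ}

theorem decay_monomial (hDj : D (X j) = X j' ^ 2) (hD : ∀ k, k ≠ j → D (X k) = 0)
    (e : σ →₀ ℕ) (c : R) :
    D (monomial e c) = monomial (e - Finsupp.single j 1 + Finsupp.single j' 2) (c * e j) := by
  rw [derivation_eq_smul_pderiv D j hD, Derivation.smul_apply, pderiv_monomial, hDj,
    X_pow_eq_monomial, smul_eq_mul, mul_comm, monomial_mul, mul_one]

theorem decay_mem_restrictSupport {a : σ} (hja : j' ≠ a) (hDj : D (X j) = X j' ^ 2)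
    (hD : ∀ k, k ≠ j → D (X k) = 0) {p : MvPolynomial σ R}
    (hp : p ∈ restrictSupport R {e | e a < 2}) : D p ∈ restrictSupport R {e | e a < 2} := by
  classical
  have hspan : Submodule.span R ((monomial · 1) '' {e : σ →₀ ℕ | e a < 2}) ≤
      (restrictSupport R {e : σ →₀ ℕ | e a < 2}).comap D.toLinearMap := by
    rw [Submodule.span_le]
    rintro _ ⟨e, he, rfl⟩
    rw [SetLike.mem_coe, Submodule.mem_comap, Derivation.coeFn_coe, decay_monomial hDj hD,
      monomial_mem_restrictSupport]
    left
    simp only [Set.mem_ofPred_eq, Finsupp.add_apply, Finsupp.tsub_apply, Finsupp.single_apply,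
      if_neg hja] at he ⊢
    omega
  exact hspan (restrictSupport_eq_span R _ ▸ hp)

end Decay

section Fusion

variable {F : MvPolynomial σ R →ₗ[R] MvPolynomial σ R} {a b : σ}

theorem fusion_X_sq_mul (hab : a ≠ b) (hF : ∀ e : σ →₀ ℕ, F (monomial e 1) =
      if 2 ≤ e a then monomial ((e.update a (e a - 2)).update b (e b + 1)) 1 else 0)
    (q : MvPolynomial σ R) : F (X a ^ 2 * q) = X b * q := by
  induction q using MvPolynomial.induction_on' with
  | monomial e c =>
    have hc : monomial e c = c • monomial e (1 : R) := by rw [smul_monomial, smul_eq_mul, mul_one]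
    rw [hc, mul_smul_comm, map_smul, X_pow_eq_monomial, monomial_mul, one_mul, hF,
      if_pos (by simp), X, mul_smul_comm, monomial_mul, one_mul]
    refine congrArg (fun m ↦ c • monomial m (1 : R)) (Finsupp.ext fun k ↦ ?_)
    classical
    simp only [Finsupp.update_apply, Finsupp.add_apply, Finsupp.single_apply]
    grind
  | add p q hp hq => rw [mul_add, map_add, hp, hq, mul_add]

theorem fusion_eq_zero_of_mem (hF : ∀ e : σ →₀ ℕ, F (monomial e 1) =
      if 2 ≤ e a then monomial ((e.update a (e a - 2)).update b (e b + 1)) 1 else 0)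
    {p : MvPolynomial σ R} (hp : p ∈ restrictSupport R {e | e a < 2}) : F p = 0 := by
  have hspan : Submodule.span R ((monomial · 1) '' {e : σ →₀ ℕ | e a < 2}) ≤ LinearMap.ker F := by
    rw [Submodule.span_le]
    rintro _ ⟨e, he, rfl⟩
    rw [SetLike.mem_coe, LinearMap.mem_ker, hF, if_neg (not_le.mpr he)]
  exact hspan (restrictSupport_eq_span R _ ▸ hp)

end Fusion

theorem fusion_decay_comm [CharP R 2] {F : MvPolynomial σ R →ₗ[R] MvPolynomial σ R}
    {D : Derivation R (MvPolynomial σ R) (MvPolynomial σ R)} {a b j j' : σ}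
    (hab : a ≠ b) (hjb : j ≠ b) (hja : j' ≠ a)
    (hF : ∀ e : σ →₀ ℕ, F (monomial e 1) =
      if 2 ≤ e a then monomial ((e.update a (e a - 2)).update b (e b + 1)) 1 else 0)
    (hDj : D (X j) = X j' ^ 2) (hD : ∀ k, k ≠ j → D (X k) = 0) (p : MvPolynomial σ R) :
    F (D p) = D (F p) := by
  induction p using MvPolynomial.induction_on' with
  | add p q hp hq => rw [map_add, map_add, hp, hq, map_add, map_add]
  | monomial e c =>
    by_cases he : 2 ≤ e a
    · have hsplit : monomial e c = X a ^ 2 * monomial (e - Finsupp.single a 2) c := by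
        rw [X_pow_eq_monomial, monomial_mul, one_mul,
          add_tsub_cancel_of_le (Finsupp.single_le_iff.mpr he)]
      rw [hsplit, D.leibniz, D.map_sq_eq_zero, smul_zero, add_zero, smul_eq_mul,
        fusion_X_sq_mul hab hF, fusion_X_sq_mul hab hF, D.leibniz, hD b hjb.symm, smul_zero,
        add_zero, smul_eq_mul]
    · have hmem : monomial e c ∈ restrictSupport R {e | e a < 2} :=
        (monomial_mem_restrictSupport R).mpr (Or.inl (not_le.mp he))
      rw [fusion_eq_zero_of_mem hF (decay_mem_restrictSupport hja hDj hD hmem),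
        fusion_eq_zero_of_mem hF hmem, map_zero]

end MvPolynomial

/-- For distinct positive integers `i ≠ j`, the fusion operator `α_i^*` (which sends a
monomial `y^e` to `y_{i-1}^{e_{i-1}-2} y_i^{e_i+1} ∏_{l ≠ i-1, i} y_l^{e_l}` if
`e_{i-1} ≥ 2` and to `0` if `e_{i-1} ≤ 1`) commutes with the decay operator `α_j`
(the derivation with `α_j y_j = y_{j-1}^2`, `α_j y_l = 0` for `l ≠ j`):
`α_i^* α_j = α_j α_i^*`. -/
theorem stmt3 (i j : ℕ) (hi : 1 ≤ i) (hj : 1 ≤ j) (hij : i ≠ j)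
    (αj : Derivation (ZMod 2) Ypoly Ypoly)
    (hαjj : αj (X j) = (X (j - 1)) ^ 2)
    (hαj : ∀ k : ℕ, k ≠ j → αj (X k) = 0)
    (Fi : Ypoly →ₗ[ZMod 2] Ypoly)
    (hFi : ∀ e : ℕ →₀ ℕ, Fi (monomial e 1) =
      if 2 ≤ e (i - 1) then
        monomial ((e.update (i - 1) (e (i - 1) - 2)).update i (e i + 1)) 1
      else 0) :
    ∀ p : Ypoly, Fi (αj p) = αj (Fi p) :=
  fusion_decay_comm (by omega) hij.symm (by omega) hFi hαjj hαj
end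

section
/- For integers 1 ≤ j ≤ i, the decay operator α_j annihilates the level subspace Y^i: α_j(Y^i) = 0. Moreover α_j annihilates Y^∞ for every j ≥ 1. -/
open MvPolynomial

/-- The level condition on exponent vectors (levels `some i` for finite `i`, `none` = `∞`). -/
def LevelCond : Option ℕ → (ℕ →₀ ℕ) → Prop
  | some 0, e => 2 ≤ e 0 ∨ Odd (e 1)
  | some (i + 1), e => e 0 ≤ 1 ∧ (∀ j, 1 ≤ j → j ≤ i → e j = 0) ∧
      Even (e (i + 1)) ∧ (2 ≤ e (i + 1) ∨ Odd (e (i + 2)))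
  | none, e => e 0 ≤ 1 ∧ ∀ j, 1 ≤ j → e j = 0

/-- By the Leibniz rule `D (X j)` enters `D (monomial e r)` with coefficient `e j`, which vanishes
in characteristic `2` when `e j` is even. -/
theorem MvPolynomial.derivation_monomial_eq_zero_of_even {σ R A : Type*} [CommSemiring R]
    [CharP R 2] [AddCommMonoid A] [Module R A] [Module (MvPolynomial σ R) A]
    [IsScalarTower R (MvPolynomial σ R) A]
    (D : Derivation R (MvPolynomial σ R) A) (j : σ) (hD : ∀ k, k ≠ j → D (X k) = 0)
    (e : σ →₀ ℕ) (he : Even (e j)) (r : R) :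
    D (monomial e r) = 0 := by
  have hD_eq : D = mkDerivation R fun k => D (X k) :=
    derivation_ext fun k => (mkDerivation_X R (fun k => D (X k)) k).symm
  rw [hD_eq, mkDerivation_monomial, Finsupp.sum, Finset.smul_sum]
  refine Finset.sum_eq_zero fun k _ => ?_
  rcases eq_or_ne k j with rfl | hkj
  · rw [(CharP.cast_eq_zero_iff R 2 _).2 he.two_dvd, map_zero, zero_smul, smul_zero]
  · rw [hD k hkj, smul_zero, smul_zero]

theorem LevelCond.even_of_le {i j : ℕ} {e : ℕ →₀ ℕ} (he : LevelCond (some i) e)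
    (hj : 1 ≤ j) (hji : j ≤ i) : Even (e j) := by
  obtain _ | i := i
  · omega
  obtain ⟨-, hzero, heven, -⟩ := he
  rcases eq_or_lt_of_le hji with rfl | hlt
  · exact heven
  · simp [hzero j hj (by omega)]

theorem LevelCond.even_of_none {j : ℕ} {e : ℕ →₀ ℕ} (he : LevelCond none e) (hj : 1 ≤ j) :
    Even (e j) := by
  simp [he.2 j hj]

theorem stmt6_general (α : ℕ → Derivation (ZMod 2) Ypoly Ypoly)
    (hα2 : ∀ j k : ℕ, k ≠ j → (α j) (X k) = 0) :
    (∀ i j : ℕ, 1 ≤ j → j ≤ i →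
      ∀ e : ℕ →₀ ℕ, LevelCond (some i) e → (α j) (monomial e (1 : ZMod 2)) = 0) ∧
    (∀ j : ℕ, 1 ≤ j →
      ∀ e : ℕ →₀ ℕ, LevelCond none e → (α j) (monomial e (1 : ZMod 2)) = 0) :=
  ⟨fun _ j hj hji _ he =>
      derivation_monomial_eq_zero_of_even (α j) j (hα2 j) _ (he.even_of_le hj hji) 1,
    fun j hj _ he => derivation_monomial_eq_zero_of_even (α j) j (hα2 j) _ (he.even_of_none hj) 1⟩

/-- For `1 ≤ j ≤ i`, the decay operator `α_j` annihilates every monomial of level `i`,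
hence annihilates `Y^i`; moreover every `α_j` (for `j ≥ 1`) annihilates `Y^∞`. -/
theorem stmt6 (α : ℕ → Derivation (ZMod 2) Ypoly Ypoly)
    (hα1 : ∀ j : ℕ, 1 ≤ j → (α j) (X j) = (X (j - 1)) ^ 2)
    (hα2 : ∀ j k : ℕ, k ≠ j → (α j) (X k) = 0) :
    (∀ i j : ℕ, 1 ≤ j → j ≤ i →
      ∀ e : ℕ →₀ ℕ, LevelCond (some i) e → (α j) (monomial e (1 : ZMod 2)) = 0) ∧
    (∀ j : ℕ, 1 ≤ j →
      ∀ e : ℕ →₀ ℕ, LevelCond none e → (α j) (monomial e (1 : ZMod 2)) = 0) :=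
  stmt6_general α hα2
end

section
/- For every level index i ∈ {0, 1, 2, ...} ∪ {∞} and every integer j ≥ 1, the decay operator α_j maps the level subspace Y^i into itself: α_j(Y^i) ⊆ Y^i. Consequently each Y^i is a subcomplex of (Y, ∂) where ∂ = Σ_{j≥1} α_j. -/
open MvPolynomial

/-- The level subspace `Y^l`. -/
noncomputable def Ysub (l : Option ℕ) : Submodule (ZMod 2) Ypoly :=
  Submodule.span (ZMod 2) {p | ∃ e : ℕ →₀ ℕ, LevelCond l e ∧ p = monomial e 1}

/-! A derivation of `Z_2[y_0, y_1, ...]` is determined by its values on the variables, so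
`α_{j+1}(y^e) = e_{j+1} y^e y_j² / y_{j+1}`, which vanishes unless `e_{j+1}` is odd. An odd
`e_{j+1}` puts `j + 1` past the coordinates a level requires to vanish or be even, and the
remaining clause of the level condition survives because `e_j` grows by two, which preserves
both a bound `≥ 2` and parity. Since `∂ y^e` is the sum of these monomials over `j`, the levels
are subcomplexes. -/

namespace MvPolynomial

variable {σ R A : Type*} [CommSemiring R] [AddCommMonoid A] [Module R A]
  [Module (MvPolynomial σ R) A] [IsScalarTower R (MvPolynomial σ R) A]

theorem derivation_monomial (D : Derivation R (MvPolynomial σ R) A) (s : σ →₀ ℕ) (r : R) :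
    D (monomial s r) =
      r • s.sum fun i k => monomial (s - Finsupp.single i 1) (k : R) • D (X i) := by
  have hD : mkDerivation R (fun i => D (X i)) = D := derivation_ext fun i => mkDerivation_X R _ i
  rw [← mkDerivation_monomial, hD]

theorem derivation_monomial_of_forall_ne (D : Derivation R (MvPolynomial σ R) A) (j : σ)
    (hD : ∀ k, k ≠ j → D (X k) = 0) (s : σ →₀ ℕ) (r : R) :
    D (monomial s r) = r • monomial (s - Finsupp.single j 1) (s j : R) • D (X j) := by
  rw [derivation_monomial, Finsupp.sum_eq_single j (fun k _ hk => by rw [hD k hk, smul_zero])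
    (fun _ => by rw [Nat.cast_zero, monomial_zero, zero_smul])]

end MvPolynomial

/-- The exponent vector of `α_{j+1}(y^e) = e_{j+1} y^e y_j² / y_{j+1}`. -/
noncomputable def decayExp (j : ℕ) (e : ℕ →₀ ℕ) : ℕ →₀ ℕ :=
  e - Finsupp.single (j + 1) 1 + Finsupp.single j 2

theorem decayExp_apply_of_lt {j k : ℕ} (e : ℕ →₀ ℕ) (hk : k < j) : decayExp j e k = e k := by
  simp [decayExp, hk.ne', (hk.trans j.lt_succ_self).ne']

theorem decayExp_apply_self (j : ℕ) (e : ℕ →₀ ℕ) : decayExp j e j = e j + 2 := by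
  simp [decayExp]

theorem monomial_mul_X_sq_eq_decayExp (j : ℕ) (e : ℕ →₀ ℕ) (c : ZMod 2) :
    monomial (e - Finsupp.single (j + 1) 1) c * X j ^ 2 = (monomial (decayExp j e) c : Ypoly) := by
  rw [X_pow_eq_monomial, monomial_mul, mul_one, decayExp]

theorem levelCond_zero_decayExp {j : ℕ} {e : ℕ →₀ ℕ} (he : LevelCond (some 0) e) :
    LevelCond (some 0) (decayExp j e) := by
  match j, he with
  | 0, _ => exact Or.inl (by rw [decayExp_apply_self]; omega)
  | 1, he =>
    rw [LevelCond] at he ⊢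
    rw [decayExp_apply_of_lt e zero_lt_one, decayExp_apply_self]
    simpa [Nat.odd_add] using he
  | j + 2, he =>
    rwa [LevelCond, decayExp_apply_of_lt e (by omega), decayExp_apply_of_lt e (by omega)]

theorem levelCond_succ_decayExp {i j : ℕ} {e : ℕ →₀ ℕ} (he : LevelCond (some (i + 1)) e)
    (hodd : Odd (e (j + 1))) : LevelCond (some (i + 1)) (decayExp j e) := by
  obtain ⟨h0, hmid, heven, hlast⟩ := he
  have hij : i + 1 ≤ j := by
    by_contra! hji
    rcases Nat.lt_or_ge j i with hj | hj
    · simp [hmid (j + 1) (by omega) hj] at hodd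
    · obtain rfl : j = i := by omega
      exact Nat.not_odd_iff_even.mpr heven hodd
  refine ⟨by rwa [decayExp_apply_of_lt e (by omega)], fun k hk1 hki => ?_, ?_⟩
  · rw [decayExp_apply_of_lt e (by omega), hmid k hk1 hki]
  obtain rfl | hlt := hij.eq_or_lt
  · rw [decayExp_apply_self]
    exact ⟨by simpa [Nat.even_add] using heven, Or.inl (by omega)⟩
  rw [decayExp_apply_of_lt e hlt]
  refine ⟨heven, ?_⟩
  obtain rfl | hlt' := (Nat.succ_le_of_lt hlt).eq_or_lt
  · rw [decayExp_apply_self]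
    simpa [Nat.odd_add] using hlast
  · rwa [decayExp_apply_of_lt e hlt']

theorem levelCond_decayExp {l : Option ℕ} {j : ℕ} {e : ℕ →₀ ℕ} (he : LevelCond l e)
    (hodd : Odd (e (j + 1))) : LevelCond l (decayExp j e) :=
  match l, he with
  | none, he => absurd hodd (by simp [he.2 (j + 1) le_add_self])
  | some 0, he => levelCond_zero_decayExp he
  | some (_ + 1), he => levelCond_succ_decayExp he hodd

theorem decay_term_mem_Ysub {l : Option ℕ} {e : ℕ →₀ ℕ} (he : LevelCond l e) (j : ℕ) :
    monomial (e - Finsupp.single (j + 1) 1) (e (j + 1) : ZMod 2) * X j ^ 2 ∈ Ysub l := by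
  rw [monomial_mul_X_sq_eq_decayExp]
  rcases Nat.even_or_odd (e (j + 1)) with heven | hodd
  · rw [ZMod.natCast_eq_zero_iff_even.mpr heven, monomial_zero]
    exact zero_mem _
  · rw [ZMod.natCast_eq_one_iff_odd.mpr hodd]
    exact Submodule.subset_span ⟨_, levelCond_decayExp he hodd, rfl⟩

theorem map_mem_Ysub_of_monomial {l : Option ℕ} (φ : Ypoly →ₗ[ZMod 2] Ypoly)
    (hφ : ∀ e, LevelCond l e → φ (monomial e 1) ∈ Ysub l) : ∀ f ∈ Ysub l, φ f ∈ Ysub l := by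
  intro f hf
  refine (Submodule.span_le (p := (Ysub l).comap φ)).mpr ?_ hf
  rintro _ ⟨e, he, rfl⟩
  exact hφ e he

theorem map_mem_Ysub_of_derivation_X_succ (δ : Derivation (ZMod 2) Ypoly Ypoly) (j : ℕ)
    (hj : δ (X (j + 1)) = X j ^ 2) (hne : ∀ k, k ≠ j + 1 → δ (X k) = 0) (l : Option ℕ) :
    ∀ f ∈ Ysub l, δ f ∈ Ysub l := by
  refine map_mem_Ysub_of_monomial (δ : Ypoly →ₗ[ZMod 2] Ypoly) fun e he => ?_
  rw [Derivation.coeFn_coe, derivation_monomial_of_forall_ne δ _ hne, hj, one_smul, smul_eq_mul]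
  exact decay_term_mem_Ysub he j

theorem map_mem_Ysub_of_derivation_X_sq (D : Derivation (ZMod 2) Ypoly Ypoly)
    (h0 : D (X 0) = 0) (hs : ∀ i : ℕ, D (X (i + 1)) = X i ^ 2) (l : Option ℕ) :
    ∀ f ∈ Ysub l, D f ∈ Ysub l := by
  refine map_mem_Ysub_of_monomial (D : Ypoly →ₗ[ZMod 2] Ypoly) fun e he => ?_
  rw [Derivation.coeFn_coe, derivation_monomial, one_smul]
  refine Submodule.finsuppSum_mem _ _ _ _ fun i _ => ?_
  rcases i with _ | j
  · rw [h0, smul_zero]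
    exact zero_mem _
  · rw [hs, smul_eq_mul]
    exact decay_term_mem_Ysub he j

/-- Every decay operator `α_j` (`j ≥ 1`) maps each level subspace `Y^l` into itself, and
consequently each `Y^l` is a subcomplex of `(Y, ∂)`, where `∂ = Σ_{j≥1} α_j` is the
derivation with `∂ y_0 = 0`, `∂ y_k = y_{k-1}^2`. -/
theorem stmt7 (α : ℕ → Derivation (ZMod 2) Ypoly Ypoly)
    (hα1 : ∀ j : ℕ, 1 ≤ j → (α j) (X j) = (X (j - 1)) ^ 2)
    (hα2 : ∀ j k : ℕ, k ≠ j → (α j) (X k) = 0)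
    (D : Derivation (ZMod 2) Ypoly Ypoly)
    (h0 : D (X 0) = 0)
    (hs : ∀ i : ℕ, D (X (i + 1)) = (X i) ^ 2) :
    (∀ j : ℕ, 1 ≤ j → ∀ l : Option ℕ, ∀ f ∈ Ysub l, (α j) f ∈ Ysub l) ∧
    (∀ l : Option ℕ, ∀ f ∈ Ysub l, D f ∈ Ysub l) := by
  refine ⟨fun j hj => ?_, map_mem_Ysub_of_derivation_X_sq D h0 hs⟩
  obtain ⟨j, rfl⟩ := Nat.exists_eq_add_of_le' hj
  have hX : α (j + 1) (X (j + 1)) = X j ^ 2 := by simpa using hα1 (j + 1) hj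
  exact map_mem_Ysub_of_derivation_X_succ (α (j + 1)) j hX (hα2 (j + 1))
end

section
/- Let X = Z_2[x_n : n ∈ Z, n ≠ 0] with differential ∂ the derivation determined by ∂x_{2k} = x_k^2 for k ≠ 0 and ∂x_{2k+1} = 0 for all k. Then the homology H(X) = ker ∂ / im ∂ is, as a Z_2-algebra, the quotient of the polynomial algebra on the classes x̄_j over all odd integers j by the relations x̄_j^2 = 0. In particular, H(X) has a Z_2-basis given by products x̄_{j_1} ··· x̄_{j_r} of classes with distinct odd indices. -/
open MvPolynomial

/-- Nonzero integers, the index set of the variables `x_n` of `X`. -/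
abbrev NZ := {n : ℤ // n ≠ 0}

/-- `X = Z_2[x_n : n ∈ ℤ, n ≠ 0]`. -/
abbrev Xpoly := MvPolynomial NZ (ZMod 2)

/-- The variable `x_m` (and `0` for the illegal index `m = 0`). -/
noncomputable def xv (m : ℤ) : Xpoly :=
  if h : m ≠ 0 then X ⟨m, h⟩ else 0

/-- A fermionic exponent vector: all exponents `≤ 1`, supported on odd indices.  The
corresponding monomials `x_{j_1} ⋯ x_{j_r}` (`j`'s odd and pairwise distinct) are the
fermionic monomials. -/
def IsFermExp (e : NZ →₀ ℕ) : Prop :=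
  ∀ n : NZ, e n ≤ 1 ∧ (e n ≠ 0 → Odd (n : ℤ))

/-- The span of the fermionic monomials, i.e. the set of fermionic polynomials. -/
noncomputable def FermSpan : Submodule (ZMod 2) Xpoly :=
  Submodule.span (ZMod 2) {p | ∃ e : NZ →₀ ℕ, IsFermExp e ∧ p = monomial e 1}

/-!
Algebraic discrete Morse theory on the monomial basis of `X`. The variables split into chains
`x_j, x_{2j}, x_{4j}, …` (`j` odd), ranked by (chain, level). A monomial is fermionic exactly when
none of its variables is *active* (even index, or exponent `≥ 2`). Otherwise let `x_n` be its
active variable of largest rank. If its exponent is `1` (so `n` is even), match `x^t` with the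
monomial obtained by replacing `x_n` by `x_{n/2}^2`; if its exponent is `≥ 2`, it is the partner
of the monomial obtained by replacing `x_n^2` by `x_{2n}`. The partner of `x^t` is the leading term
of `∂ x^t` for a suitable well-founded weight, so `∂` is triangular on matched pairs and every
cycle is a fermionic polynomial plus a boundary. Every monomial of a boundary contains a
square, which makes the fermionic part unique.
-/

namespace MvPolynomial

variable {σ K α : Type*} [Field K] [LinearOrder α]

def IsLeadingMonomial (D : MvPolynomial σ K →ₗ[K] MvPolynomial σ K) (μ : (σ →₀ ℕ) → α)
    (t d : σ →₀ ℕ) : Prop :=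
  coeff d (D (monomial t 1)) ≠ 0 ∧ ∀ d' ∈ (D (monomial t 1)).support, d' ≠ d → μ d' < μ d

theorem restrictSupport_le_iff {R : Type*} [CommSemiring R]
    {S : Submodule R (MvPolynomial σ R)} {s : Set (σ →₀ ℕ)} :
    restrictSupport R s ≤ S ↔ ∀ e ∈ s, monomial e 1 ∈ S := by
  rw [restrictSupport_eq_span, Submodule.span_le, Set.image_subset_iff]
  rfl

theorem mem_of_forall_monomial_mem {R : Type*} [CommSemiring R]
    {S : Submodule R (MvPolynomial σ R)} {p : MvPolynomial σ R}
    (h : ∀ e ∈ p.support, monomial e 1 ∈ S) : p ∈ S :=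
  restrictSupport_le_iff.mpr h ((mem_restrictSupport_iff R).mpr subset_rfl)

theorem linearMap_apply_eq_sum {R M : Type*} [CommSemiring R] [AddCommMonoid M]
    [Module R M] (D : MvPolynomial σ R →ₗ[R] M) (p : MvPolynomial σ R) :
    D p = ∑ t ∈ p.support, coeff t p • D (monomial t 1) := by
  conv_lhs => rw [p.as_sum]
  simp only [map_sum, ← map_smul, smul_eq_mul, mul_one]

variable {D : MvPolynomial σ K →ₗ[K] MvPolynomial σ K} {μ : (σ →₀ ℕ) → α}
  {M : (σ →₀ ℕ) → (σ →₀ ℕ) → Prop}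

theorem eq_zero_of_map_eq_zero_of_matched (hlead : ∀ t d, M t d → IsLeadingMonomial D μ t d)
    (hinj : ∀ t₁ t₂ d, M t₁ d → M t₂ d → t₁ = t₂) {p : MvPolynomial σ K}
    (hp : p ∈ restrictSupport K {t | ∃ d, M t d}) (hD : D p = 0) : p = 0 := by
  by_contra hne
  have hmatched : ∀ t ∈ p.support, ∃ d, M t d := fun t ht => hp ht
  choose! lead hM using hmatched
  obtain ⟨t₀, ht₀, hmax⟩ :=
    p.support.exists_max_image (μ ∘ lead) (support_nonempty.mpr hne)
  -- only `t₀` contributes to the coefficient of `lead t₀` in `D p`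
  have hcoeff : coeff (lead t₀) (D p) = coeff t₀ p * coeff (lead t₀) (D (monomial t₀ 1)) := by
    rw [linearMap_apply_eq_sum, coeff_sum]
    refine Finset.sum_eq_single t₀ (fun t ht htt₀ => ?_) (fun h => absurd ht₀ h)
    rw [coeff_smul, smul_eq_mul, mul_eq_zero, or_iff_not_imp_right, ← ne_eq, ← mem_support_iff]
    intro hsupp
    have hne : lead t₀ ≠ lead t := fun h => htt₀ (hinj t t₀ _ (hM t ht) (h ▸ hM t₀ ht₀))
    exact absurd (hmax t ht) ((hlead t _ (hM t ht)).2 _ hsupp hne).not_ge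
  rw [hD, coeff_zero, eq_comm] at hcoeff
  exact mul_ne_zero (mem_support_iff.mp ht₀) (hlead t₀ _ (hM t₀ ht₀)).1 hcoeff

theorem restrictSupport_sup_restrictSupport_sup_range_eq_top [WellFoundedLT α]
    (C : Set (σ →₀ ℕ)) (hlead : ∀ t d, M t d → IsLeadingMonomial D μ t d)
    (hcover : ∀ e, e ∈ C ∨ (∃ d, M e d) ∨ ∃ t, M t e) :
    restrictSupport K C ⊔ restrictSupport K {t | ∃ d, M t d} ⊔ LinearMap.range D = ⊤ := by
  set S := restrictSupport K C ⊔ restrictSupport K {t | ∃ d, M t d} ⊔ LinearMap.range D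
  suffices h : ∀ e, monomial e 1 ∈ S by
    rw [eq_top_iff, ← restrictSupport_univ, restrictSupport_le_iff]
    exact fun e _ => h e
  intro e
  induction e using (InvImage.wf μ wellFounded_lt).induction with | _ e ih
  rcases hcover e with he | he | ⟨t, hte⟩
  · exact Submodule.mem_sup_left <| Submodule.mem_sup_left <|
      (monomial_mem_restrictSupport K).mpr (Or.inl he)
  · exact Submodule.mem_sup_left <| Submodule.mem_sup_right <|
      (monomial_mem_restrictSupport K).mpr (Or.inl he)
  obtain ⟨hc, hlower⟩ := hlead t e hte
  set c := coeff e (D (monomial t 1))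
  -- `D (monomial t 1) - c • monomial e 1` only involves monomials below `e`
  have hrest : D (monomial t 1) - c • monomial e 1 ∈ S := by
    refine mem_of_forall_monomial_mem fun d hd => ih d ?_
    classical
    rw [mem_support_iff, coeff_sub, coeff_smul, coeff_monomial] at hd
    have hde : d ≠ e := by
      rintro rfl
      simp [c] at hd
    refine hlower d ?_ hde
    simpa [mem_support_iff, if_neg hde.symm] using hd
  have hmem : c • monomial e (1 : K) ∈ S := by
    have hD : D (monomial t 1) ∈ S := Submodule.mem_sup_right (LinearMap.mem_range_self D _)
    simpa using S.sub_mem hD hrest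
  simpa [smul_smul, inv_mul_cancel₀ hc] using S.smul_mem c⁻¹ hmem

theorem exists_eq_add_map_of_map_eq_zero [WellFoundedLT α] {C : Set (σ →₀ ℕ)}
    (hDD : ∀ p, D (D p) = 0) (hC : ∀ e ∈ C, D (monomial e 1) = 0)
    (hlead : ∀ t d, M t d → IsLeadingMonomial D μ t d)
    (hinj : ∀ t₁ t₂ d, M t₁ d → M t₂ d → t₁ = t₂)
    (hcover : ∀ e, e ∈ C ∨ (∃ d, M e d) ∨ ∃ t, M t e)
    {p : MvPolynomial σ K} (hp : D p = 0) :
    ∃ r ∈ restrictSupport K C, ∃ q, p = r + D q := by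
  have hp' : p ∈ restrictSupport K C ⊔ restrictSupport K {t | ∃ d, M t d} ⊔
      LinearMap.range D := by
    rw [restrictSupport_sup_restrictSupport_sup_range_eq_top C hlead hcover]
    trivial
  obtain ⟨_, hrt, _, ⟨q, rfl⟩, rfl⟩ := Submodule.mem_sup.mp hp'
  obtain ⟨r, hr, t, ht, rfl⟩ := Submodule.mem_sup.mp hrt
  have hDr : D r = 0 := (restrictSupport_le_iff (S := LinearMap.ker D)).mpr hC hr
  have hDt : D t = 0 := by simpa [hDr, hDD] using hp
  refine ⟨r, hr, q, ?_⟩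
  rw [eq_zero_of_map_eq_zero_of_matched hlead hinj ht hDt, add_zero]

end MvPolynomial

namespace NZ

def level (n : NZ) : ℕ := padicValInt 2 n

def chain (n : NZ) : ℕ := Encodable.encode ((n : ℤ) / 2 ^ n.level)

def rank (n : NZ) : ℕ ×ₗ ℕ := toLex (n.chain, n.level)

def double (n : NZ) : NZ := ⟨2 * n, mul_ne_zero two_ne_zero n.2⟩

def half (n : NZ) : NZ :=
  if h : Even (n : ℤ) then ⟨n / 2, by obtain ⟨k, hk⟩ := h; have := n.2; omega⟩ else n

variable {m n : NZ}

theorem even_double (n : NZ) : Even (n.double : ℤ) := even_two_mul (n : ℤ)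

theorem half_double (n : NZ) : n.double.half = n := by
  ext
  simp [half, double]

theorem double_half (hn : Even (n : ℤ)) : n.half.double = n := by
  ext
  simp [half, double, hn, Int.mul_ediv_cancel' (even_iff_two_dvd.mp hn)]

theorem level_double (n : NZ) : n.double.level = n.level + 1 := by
  simpa [level, double, mul_comm] using padicValInt_mul_eq_succ (p := 2) (n : ℤ) n.2

theorem chain_double (n : NZ) : n.double.chain = n.chain := by
  rw [chain, level_double, pow_succ', double, Int.mul_ediv_mul_of_pos _ _ two_pos, chain]

theorem one_le_level_iff : 1 ≤ n.level ↔ Even (n : ℤ) := by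
  simpa [level, n.2, even_iff_two_dvd] using (padicValInt_dvd_iff (p := 2) 1 n).symm

theorem rank_injective : Function.Injective rank := by
  intro m n h
  simp only [rank, toLex_inj, Prod.mk.injEq, chain] at h
  obtain ⟨hc, hl⟩ := h
  have hm := Int.mul_ediv_cancel' (padicValInt_dvd (p := 2) (m : ℤ))
  have hn := Int.mul_ediv_cancel' (padicValInt_dvd (p := 2) (n : ℤ))
  push_cast at hm hn
  ext
  simp only [level] at hl hc
  rw [hl] at hc hm
  rw [← hm, Encodable.encode_injective hc, hn]

theorem rank_lt_rank_double (n : NZ) : n.rank < n.double.rank := by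
  simp [rank, Prod.Lex.toLex_lt_toLex, chain_double, level_double]

theorem rank_le_rank_half_of_lt (hn : Even (n : ℤ)) (h : m.rank < n.rank) :
    m.rank ≤ n.half.rank := by
  rw [← double_half hn, rank, rank, chain_double, level_double, Prod.Lex.toLex_lt_toLex] at h
  rw [rank, rank, Prod.Lex.toLex_le_toLex]
  omega

theorem rank_half_lt (hn : Even (n : ℤ)) : n.half.rank < n.rank := by
  simpa [double_half hn] using rank_lt_rank_double n.half

theorem half_ne (hn : Even (n : ℤ)) : n.half ≠ n :=
  fun h => (rank_half_lt hn).ne (congrArg rank h)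

theorem double_ne (n : NZ) : n.double ≠ n :=
  fun h => (rank_lt_rank_double n).ne' (congrArg rank h)

end NZ

theorem xv_coe (n : NZ) : xv n = X n := dif_pos n.2

namespace Xpoly

open NZ

variable {e : NZ →₀ ℕ} {m n : NZ}

noncomputable def moveDown (n : NZ) (e : NZ →₀ ℕ) : NZ →₀ ℕ :=
  e - Finsupp.single n 1 + Finsupp.single n.half 2

noncomputable def moveUp (n : NZ) (e : NZ →₀ ℕ) : NZ →₀ ℕ :=
  e - Finsupp.single n 2 + Finsupp.single n.double 1

theorem moveUp_moveDown (hn : Even (n : ℤ)) (h : 1 ≤ e n) : moveUp n.half (moveDown n e) = e := by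
  have hne := half_ne hn
  ext x
  simp only [moveUp, moveDown, double_half hn, Finsupp.add_apply,
    Finsupp.tsub_apply, Finsupp.single_apply]
  split_ifs <;> simp_all

theorem moveDown_moveUp (h : 2 ≤ e n) : moveDown n.double (moveUp n e) = e := by
  have hne := double_ne n
  ext x
  simp only [moveUp, moveDown, half_double, Finsupp.add_apply,
    Finsupp.tsub_apply, Finsupp.single_apply]
  split_ifs <;> simp_all

def IsActive (e : NZ →₀ ℕ) (n : NZ) : Prop :=
  e n ≠ 0 ∧ (Even (n : ℤ) ∨ 2 ≤ e n)

def IsPivot (e : NZ →₀ ℕ) (n : NZ) : Prop :=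
  IsActive e n ∧ ∀ m, IsActive e m → m.rank ≤ n.rank

theorem exists_isActive_of_not_isFermExp (h : ¬ IsFermExp e) : ∃ n, IsActive e n := by
  simp only [IsFermExp, not_forall, not_and_or, not_le] at h
  obtain ⟨n, hn | ⟨hn0, hodd⟩⟩ := h
  · exact ⟨n, by omega, Or.inr hn⟩
  · exact ⟨n, hn0, Or.inl (Int.not_odd_iff_even.mp hodd)⟩

theorem exists_isPivot (h : ¬ IsFermExp e) : ∃ n, IsPivot e n := by
  classical
  obtain ⟨n₀, hn₀⟩ := exists_isActive_of_not_isFermExp h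
  have hmem : ∀ m, m ∈ e.support.filter (IsActive e) ↔ IsActive e m := fun m => by
    rw [Finset.mem_filter, Finsupp.mem_support_iff]
    exact ⟨And.right, fun h => ⟨h.1, h⟩⟩
  obtain ⟨n, hn, hmax⟩ :=
    (e.support.filter (IsActive e)).exists_max_image rank ⟨n₀, (hmem n₀).mpr hn₀⟩
  exact ⟨n, (hmem n).mp hn, fun m hm => hmax m ((hmem m).mpr hm)⟩

theorem IsPivot.eq (h₁ : IsPivot e m) (h₂ : IsPivot e n) : m = n :=
  rank_injective (le_antisymm (h₂.2 m h₁.1) (h₁.2 n h₂.1))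

theorem IsPivot.even_of_eq_one (h : IsPivot e n) (h1 : e n = 1) : Even (n : ℤ) :=
  h.1.2.resolve_right (by omega)

theorem IsPivot.moveDown_half (h : IsPivot e n) (h1 : e n = 1) : IsPivot (moveDown n e) n.half := by
  have hn := h.even_of_eq_one h1
  have hne := half_ne hn
  refine ⟨⟨by simp [moveDown, hne], Or.inr (by simp [moveDown, hne])⟩, ?_⟩
  rintro m ⟨hm0, hm⟩
  by_cases hmh : m = n.half
  · rw [hmh]
  have hmn : m ≠ n := by rintro rfl; simp [moveDown, h1, hne] at hm0
  have hem : moveDown n e m = e m := by simp [moveDown, Ne.symm hmn, Ne.symm hmh]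
  rw [hem] at hm0 hm
  exact rank_le_rank_half_of_lt hn (lt_of_le_of_ne (h.2 m ⟨hm0, hm⟩) (rank_injective.ne hmn))

theorem IsPivot.moveUp_double (h : IsPivot e n) :
    IsPivot (moveUp n e) n.double ∧ moveUp n e n.double = 1 := by
  have hne := double_ne n
  have hdouble : e n.double = 0 := by
    by_contra h0
    exact (h.2 _ ⟨h0, Or.inl (even_double n)⟩).not_gt (rank_lt_rank_double n)
  have h1 : moveUp n e n.double = 1 := by simp [moveUp, hne, hdouble]
  refine ⟨⟨⟨by simp [h1], Or.inl (even_double n)⟩, ?_⟩, h1⟩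
  rintro m ⟨hm0, hm⟩
  by_cases hmd : m = n.double
  · rw [hmd]
  refine le_of_lt (lt_of_le_of_lt ?_ (rank_lt_rank_double n))
  by_cases hmn : m = n
  · rw [hmn]
  have hem : moveUp n e m = e m := by simp [moveUp, Ne.symm hmn, Ne.symm hmd]
  rw [hem] at hm0 hm
  exact h.2 m ⟨hm0, hm⟩

def Matched (t d : NZ →₀ ℕ) : Prop :=
  ∃ n, IsPivot t n ∧ t n = 1 ∧ moveDown n t = d

theorem Matched.injective {t₁ t₂ d : NZ →₀ ℕ} (h₁ : Matched t₁ d) (h₂ : Matched t₂ d) :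
    t₁ = t₂ := by
  obtain ⟨n₁, hp₁, h1₁, rfl⟩ := h₁
  obtain ⟨n₂, hp₂, h1₂, hd⟩ := h₂
  have hhalf : n₁.half = n₂.half := (hp₁.moveDown_half h1₁).eq (hd ▸ hp₂.moveDown_half h1₂)
  rw [← moveUp_moveDown (hp₁.even_of_eq_one h1₁) h1₁.ge,
    ← moveUp_moveDown (hp₂.even_of_eq_one h1₂) h1₂.ge, hd, hhalf]

theorem isFermExp_or_matched (e : NZ →₀ ℕ) :
    IsFermExp e ∨ (∃ d, Matched e d) ∨ ∃ t, Matched t e := by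
  by_cases hf : IsFermExp e
  · exact Or.inl hf
  obtain ⟨n, hn⟩ := exists_isPivot hf
  obtain h1 | h2 : e n = 1 ∨ 2 ≤ e n := by have := hn.1.1; omega
  · exact Or.inr (Or.inl ⟨_, n, hn, h1, rfl⟩)
  · obtain ⟨hp, h1⟩ := hn.moveUp_double
    exact Or.inr (Or.inr ⟨_, n.double, hp, h1, moveDown_moveUp h2⟩)

/-- `x_n` weighs `level n + 2` in the coordinate of its chain, so replacing `x_n` by `x_{n/2}^2`
adds `level n` there; colexicographically, the largest `chain` index dominates. -/
noncomputable def weight (e : NZ →₀ ℕ) : Colex (ℕ →₀ ℕ) :=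
  toColex (Finsupp.linearCombination ℕ (fun n : NZ => Finsupp.single n.chain (n.level + 2)) e)

theorem weight_moveDown (hn : Even (n : ℤ)) (h : 1 ≤ e n) :
    weight (moveDown n e) = weight e + toColex (Finsupp.single n.chain n.level) := by
  have hsplit : moveDown n e + Finsupp.single n 1 = e + Finsupp.single n.half 2 := by
    have hne := half_ne hn
    ext x
    simp only [moveDown, Finsupp.add_apply, Finsupp.tsub_apply, Finsupp.single_apply]
    split_ifs <;> simp_all
  have hlevel := double_half hn ▸ level_double n.half
  have hchain := double_half hn ▸ chain_double n.half
  have key := congrArg (Finsupp.linearCombination ℕ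
    (fun n : NZ => Finsupp.single n.chain (n.level + 2))) hsplit
  simp only [map_add, Finsupp.linearCombination_single, smul_eq_mul, one_smul,
    Finsupp.smul_single] at key
  apply add_right_cancel (b := toColex (Finsupp.single n.chain (n.level + 2)))
  rw [weight, weight, ← toColex_add, ← toColex_add, ← toColex_add, key, add_assoc,
    ← Finsupp.single_add, hchain]
  congr 3
  omega

theorem toColex_single_lt_toColex_single (h : m.rank < n.rank) (hn : 1 ≤ n.level) :
    toColex (Finsupp.single m.chain m.level) < toColex (Finsupp.single n.chain n.level) := by
  rw [rank, rank, Prod.Lex.toLex_lt_toLex] at h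
  dsimp only at h
  refine Finsupp.Colex.lt_iff.mpr ⟨n.chain, fun j hj => ?_, ?_⟩
  · have hmj : m.chain ≠ j := by omega
    simp [hj.ne, hmj]
  · rcases h with h | ⟨h, h'⟩
    · simp [h.ne]; omega
    · simpa [h] using h'

theorem weight_moveDown_lt (hm : Even (m : ℤ)) (hn : Even (n : ℤ)) (hem : 1 ≤ e m)
    (hen : 1 ≤ e n) (h : m.rank < n.rank) : weight (moveDown m e) < weight (moveDown n e) := by
  rw [weight_moveDown hm hem, weight_moveDown hn hen]
  exact add_lt_add_right (toColex_single_lt_toColex_single h (one_le_level_iff.mpr hn)) _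

noncomputable def differential : Derivation (ZMod 2) Xpoly Xpoly :=
  mkDerivation _ fun n : NZ => if Even (n : ℤ) then X n.half ^ 2 else 0

theorem eq_differential (D : Derivation (ZMod 2) Xpoly Xpoly)
    (heven : ∀ k : ℤ, k ≠ 0 → D (xv (2 * k)) = (xv k) ^ 2)
    (hodd : ∀ k : ℤ, D (xv (2 * k + 1)) = 0) : D = differential := by
  refine derivation_ext fun n => ?_
  rw [differential, mkDerivation_X]
  split_ifs with hn
  · have h := heven n.half n.half.2
    rwa [show 2 * (n.half : ℤ) = n.half.double from rfl, xv_coe, xv_coe, double_half hn] at h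
  · obtain ⟨k, hk⟩ := Int.not_even_iff_odd.mp hn
    rw [← xv_coe, hk, hodd]

theorem differential_monomial (e : NZ →₀ ℕ) :
    differential (monomial e 1) =
      ∑ n ∈ e.support with Even n.val, (e n : ZMod 2) • monomial (moveDown n e) 1 := by
  rw [differential, mkDerivation_monomial, one_smul, Finsupp.sum, Finset.sum_filter]
  refine Finset.sum_congr rfl fun n _ => ?_
  split_ifs
  · rw [X_pow_eq_monomial, smul_eq_mul, monomial_mul, smul_monomial, moveDown]
    simp
  · exact smul_zero _

theorem differential_monomial_eq_zero {e : NZ →₀ ℕ} (h : IsFermExp e) :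
    differential (monomial e 1) = 0 := by
  rw [differential_monomial]
  refine Finset.sum_eq_zero fun n hn => ?_
  obtain ⟨hn, heven⟩ := Finset.mem_filter.mp hn
  exact absurd ((h n).2 (Finsupp.mem_support_iff.mp hn)) (Int.not_odd_iff_even.mpr heven)

theorem differential_differential (p : Xpoly) : differential (differential p) = 0 := by
  induction p using MvPolynomial.induction_on with
  | C a => rw [← algebraMap_eq, Derivation.map_algebraMap, map_zero]
  | add p q hp hq => rw [map_add, map_add, hp, hq, add_zero]
  | mul_X p n hp =>
    have hX : differential (differential (X n)) = 0 := by
      rw [differential, mkDerivation_X]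
      split_ifs
      · rw [sq, Derivation.leibniz, smul_eq_mul, CharTwo.add_self_eq_zero]
      · exact map_zero _
    simp only [Derivation.leibniz, map_add, smul_eq_mul, hp, hX, mul_zero, zero_add,
      mul_comm (differential (X n)), CharTwo.add_self_eq_zero]

theorem coeff_differential_monomial (t d : NZ →₀ ℕ) :
    coeff d (differential (monomial t 1)) =
      ∑ m ∈ t.support with Even m.val, if moveDown m t = d then (t m : ZMod 2) else 0 := by
  simp [differential_monomial, coeff_sum, coeff_monomial]

theorem Matched.isLeadingMonomial {t d : NZ →₀ ℕ} (h : Matched t d) :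
    IsLeadingMonomial (differential : Xpoly →ₗ[ZMod 2] Xpoly) weight t d := by
  obtain ⟨n, hp, h1, rfl⟩ := h
  have hn := hp.even_of_eq_one h1
  have hlt : ∀ m ∈ t.support.filter (fun m => Even m.val), m ≠ n →
      weight (moveDown m t) < weight (moveDown n t) := by
    intro m hm hmn
    obtain ⟨hm, hmeven⟩ := Finset.mem_filter.mp hm
    have hm0 := Finsupp.mem_support_iff.mp hm
    exact weight_moveDown_lt hmeven hn (Nat.one_le_iff_ne_zero.mpr hm0) h1.ge
      (lt_of_le_of_ne (hp.2 m ⟨hm0, Or.inl hmeven⟩) (rank_injective.ne hmn))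
  have hnmem : n ∈ t.support.filter (fun m => Even m.val) :=
    Finset.mem_filter.mpr ⟨Finsupp.mem_support_iff.mpr (by omega), hn⟩
  refine ⟨?_, fun d hd hne => ?_⟩
  · rw [Derivation.coeFn_coe, coeff_differential_monomial,
      Finset.sum_eq_single_of_mem n hnmem fun m hm hmn =>
        if_neg (ne_of_apply_ne weight (hlt m hm hmn).ne), if_pos rfl, h1]
    exact one_ne_zero
  · rw [mem_support_iff, Derivation.coeFn_coe, coeff_differential_monomial] at hd
    obtain ⟨m, hm, hmd⟩ := Finset.exists_ne_zero_of_sum_ne_zero hd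
    obtain ⟨rfl, -⟩ := ite_ne_right_iff.mp hmd
    exact hlt m hm fun hmn => hne (hmn ▸ rfl)

theorem fermSpan_eq_restrictSupport : FermSpan = restrictSupport (ZMod 2) {e | IsFermExp e} := by
  rw [FermSpan, restrictSupport_eq_span]
  congr 1
  ext p
  simp [eq_comm]

theorem exists_mem_fermSpan_eq_add_differential {p : Xpoly} (hp : differential p = 0) :
    ∃ r ∈ FermSpan, ∃ q, p = r + differential q := by
  rw [fermSpan_eq_restrictSupport]
  exact exists_eq_add_map_of_map_eq_zero (D := (differential : Xpoly →ₗ[ZMod 2] Xpoly))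
    (μ := weight) differential_differential (fun e he => differential_monomial_eq_zero he)
    (fun t d h => h.isLeadingMonomial) (fun t₁ t₂ d h₁ h₂ => h₁.injective h₂)
    isFermExp_or_matched hp

theorem differential_mem_restrictSupport (p : Xpoly) :
    differential p ∈ restrictSupport (ZMod 2) {e | ∃ n, 2 ≤ e n} := by
  rw [← Derivation.coeFn_coe, linearMap_apply_eq_sum]
  refine Submodule.sum_mem _ fun t _ => Submodule.smul_mem _ _ ?_
  rw [Derivation.coeFn_coe, differential_monomial]
  refine Submodule.sum_mem _ fun n hn => Submodule.smul_mem _ _ ?_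
  refine (monomial_mem_restrictSupport _).mpr (Or.inl ⟨n.half, ?_⟩)
  simp [moveDown, half_ne (Finset.mem_filter.mp hn).2]

theorem eq_of_add_differential_eq {r r' q q' : Xpoly} (hr : r ∈ FermSpan) (hr' : r' ∈ FermSpan)
    (h : r + differential q = r' + differential q') : r = r' := by
  have hferm : r - r' ∈ restrictSupport (ZMod 2) {e | IsFermExp e} :=
    fermSpan_eq_restrictSupport ▸ sub_mem hr hr'
  have hsq : r - r' ∈ restrictSupport (ZMod 2) {e | ∃ n, 2 ≤ e n} := by
    rw [show r - r' = differential (q' - q) by rw [map_sub]; linear_combination h]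
    exact differential_mem_restrictSupport _
  rw [← sub_eq_zero, ← support_eq_empty, Finset.eq_empty_iff_forall_notMem]
  intro d hd
  obtain ⟨n, hn⟩ := hsq hd
  have := (hferm hd n).1
  omega

end Xpoly

/-- For the derivation `∂` on `X` with `∂ x_{2k} = x_k^2` (`k ≠ 0`) and `∂ x_{2k+1} = 0`:
every cycle is, modulo boundaries, equal to a unique fermionic polynomial (so `H(X)` has
`Z_2`-basis the fermionic monomials), and the square of each odd-index class is a
boundary (so `H(X)` is the polynomial algebra on the classes `x̄_j`, `j` odd, modulo
`x̄_j^2 = 0`). -/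
theorem stmt10 (D : Derivation (ZMod 2) Xpoly Xpoly)
    (heven : ∀ k : ℤ, k ≠ 0 → D (xv (2 * k)) = (xv k) ^ 2)
    (hodd : ∀ k : ℤ, D (xv (2 * k + 1)) = 0) :
    (∀ p : Xpoly, D p = 0 →
      ∃! r : Xpoly, r ∈ FermSpan ∧ ∃ q : Xpoly, p = r + D q) ∧
    (∀ j : ℤ, Odd j → ∃ q : Xpoly, (xv j) ^ 2 = D q) := by
  refine ⟨fun p hp => ?_, fun j hj => ⟨xv (2 * j), (heven j (by rintro rfl; simp at hj)).symm⟩⟩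
  obtain rfl := Xpoly.eq_differential D heven hodd
  obtain ⟨r, hr, q, rfl⟩ := Xpoly.exists_mem_fermSpan_eq_add_differential hp
  exact ⟨r, ⟨hr, q, rfl⟩, fun r' ⟨hr', q', h⟩ => Xpoly.eq_of_add_differential_eq hr' hr h.symm⟩
end

section
/- In the chain complex A_+ ⊗ X (free X-module on a_{1/2}, a_{3/2}, ... with ∂a_{n-1/2} = Σ_{i=1}^{n-1} a_{i-1/2} x_{n-i} and the Leibniz rule), every cycle f is homologous to an element of the form a_{1/2} · p where p ∈ X is a clean polynomial (a Z_2-linear combination of products of distinct odd-indexed variables, none equal to x_1); that is, there exist such p and some g ∈ A_+ ⊗ X with f = a_{1/2} p + ∂g. -/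
open MvPolynomial

/-- `A_+ ⊗ X`, the free `X`-module with basis `a_{1/2}, a_{3/2}, ...`; index `m : ℕ`
stands for `a_{m + 1/2}` (so index `0` is `a_{1/2}`). -/
abbrev AX := ℕ →₀ Xpoly

/-- A clean exponent vector: all exponents `≤ 1`, supported on odd indices `≠ 1`.  The
corresponding monomials are products of distinct odd-indexed variables, none equal to
`x_1`. -/
def IsCleanExp (e : NZ →₀ ℕ) : Prop :=
  ∀ n : NZ, e n ≤ 1 ∧ (e n ≠ 0 → Odd (n : ℤ) ∧ (n : ℤ) ≠ 1)

/-- The span of clean monomials, i.e. the set of clean polynomials. -/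
noncomputable def CleanSpan : Submodule (ZMod 2) Xpoly :=
  Submodule.span (ZMod 2) {p | ∃ e : NZ →₀ ℕ, IsCleanExp e ∧ p = monomial e 1}

/-!
Along each chain `x_m, x_{2m}, x_{4m}, …` (`m` odd) the complex `X` is a tensor product of the
acyclic pieces `𝔽₂[x_k²] ⊗ ⟨1, x_{2k}⟩` (with `∂ x_{2k} = x_k²`) and of `⟨1, x_m⟩`. Contracting,
on each monomial, the first piece (in the order given by `height`) that is not at its base point
gives a homotopy `h` with `∂h + h∂ = 1 + π`, where `π` projects onto the squarefree monomials in
odd variables. Hence every cycle `q` of `X` equals `π q + ∂(h q)`, while `π ∂ = 0` shows that no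
nonzero combination of such monomials is a boundary.

In `A_+ ⊗ X` let `a_{n+1/2}` be the top basis element of a cycle `f`, with coefficient `q`. Then
`q` is a cycle of `X`, so `q = c + x_1 t + ∂r` with `c, t` clean. If `n ≥ 1`, the coefficient of
`a_{n-1/2}` in `∂f` shows that `x_1 q` is a boundary; then so is `x_1 c`, whence `c = 0`. Adding
`∂(a_{n+3/2} t + a_{n+1/2} r)` removes the top coefficient, and when `n = 0` it leaves `a_{1/2} c`.
-/

noncomputable section

namespace CleanCycles

def double (k : NZ) : NZ := ⟨2 * k, mul_ne_zero two_ne_zero k.2⟩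

def height (k : NZ) : ℕ := 2 * (k : ℤ).natAbs + if (k : ℤ) < 0 then 1 else 0

section Exponents

variable {e : NZ →₀ ℕ} {i j k : NZ}

lemma height_injective : Function.Injective height := by
  intro j k h
  have hj := j.2
  have hk := k.2
  simp only [height] at h
  ext
  split_ifs at h <;> omega

lemma height_lt_height_double (k : NZ) : height k < height (double k) := by
  have hk := k.2
  simp only [height, double]
  split_ifs <;> omega

lemma double_ne_self (k : NZ) : double k ≠ k :=
  fun h => (height_lt_height_double k).ne' (congrArg height h)

lemma double_injective : Function.Injective double := by
  intro j k h
  have := congrArg Subtype.val h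
  simp only [double] at this
  ext
  omega

lemma exists_double_eq {n : NZ} (h : Even (n : ℤ)) : ∃ k, double k = n := by
  obtain ⟨t, ht⟩ := h
  have hn := n.2
  exact ⟨⟨t, by omega⟩, Subtype.ext (by simp only [double]; omega)⟩

lemma not_odd_double (k : NZ) : ¬ Odd (double k : ℤ) := by
  simp only [double, Int.not_odd_iff_even]
  exact even_two_mul _

/-- `x^(lower e k) = x^e · x_k² / x_{2k}` is the term of `∂ x^e` coming from `x_{2k}`, and
`raise e k` undoes it (the subtraction in `ℕ` truncates, hence the hypotheses below). -/
def lower (e : NZ →₀ ℕ) (k : NZ) : NZ →₀ ℕ :=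
  e - Finsupp.single (double k) 1 + Finsupp.single k 2

def raise (e : NZ →₀ ℕ) (k : NZ) : NZ →₀ ℕ :=
  e - Finsupp.single k 2 + Finsupp.single (double k) 1

lemma lower_apply (x : NZ) :
    lower e k x = e x - (if double k = x then 1 else 0) + if k = x then 2 else 0 := by
  simp only [lower, Finsupp.add_apply, Finsupp.tsub_apply, Finsupp.single_apply]

lemma raise_apply (x : NZ) :
    raise e k x = e x - (if k = x then 2 else 0) + if double k = x then 1 else 0 := by
  simp only [raise, Finsupp.add_apply, Finsupp.tsub_apply, Finsupp.single_apply]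

lemma lower_raise (h : 2 ≤ e k) : lower (raise e k) k = e := by
  have := double_ne_self k
  ext x
  simp only [lower_apply, raise_apply]
  split_ifs <;> grind

lemma raise_lower (h : 1 ≤ e (double k)) : raise (lower e k) k = e := by
  have := double_ne_self k
  ext x
  simp only [lower_apply, raise_apply]
  split_ifs <;> grind

lemma raise_lower_comm (hjk : j ≠ k) (hkj : k ≠ double j) :
    raise (lower e j) k = lower (raise e k) j := by
  have := double_injective.ne hjk
  ext x
  simp only [lower_apply, raise_apply]
  split_ifs <;> grind

/-- The factor `𝔽₂[x_k²] ⊗ ⟨1, x_{2k}⟩` of `x^e` is its base point `1`. -/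
def IsTrivialAt (e : NZ →₀ ℕ) (k : NZ) : Prop := e k ≤ 1 ∧ Even (e (double k))

def IsSquarefreeOdd (e : NZ →₀ ℕ) : Prop := ∀ k, IsTrivialAt e k

lemma isSquarefreeOdd_iff : IsSquarefreeOdd e ↔ ∀ n, e n ≤ 1 ∧ (e n ≠ 0 → Odd (n : ℤ)) := by
  refine ⟨fun h n => ⟨(h n).1, fun hn => ?_⟩, fun h k => ⟨(h k).1, ?_⟩⟩
  · by_contra hodd
    obtain ⟨k, rfl⟩ := exists_double_eq (Int.not_odd_iff_even.1 hodd)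
    obtain ⟨a, ha⟩ := (h k).2
    have := (h (double k)).1
    omega
  · by_cases h0 : e (double k) = 0
    · simp [h0]
    · exact absurd ((h _).2 h0) (not_odd_double k)

lemma even_lower_apply_double_iff (hij : i ≠ j) :
    Even (lower e j (double i)) ↔ Even (e (double i)) := by
  have := double_injective.ne hij
  rw [lower_apply]
  split_ifs <;> grind

lemma isTrivialAt_lower_iff (hij : i ≠ j) (hi : i ≠ double j) :
    IsTrivialAt (lower e j) i ↔ IsTrivialAt e i := by
  rw [IsTrivialAt, IsTrivialAt, even_lower_apply_double_iff hij, lower_apply,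
    if_neg hi.symm, if_neg hij.symm, add_zero, Nat.sub_zero]

lemma not_isTrivialAt_lower_self : ¬ IsTrivialAt (lower e j) j := by
  rw [IsTrivialAt, lower_apply, if_pos rfl]
  omega

def IsFirstBad (e : NZ →₀ ℕ) (k : NZ) : Prop :=
  ¬ IsTrivialAt e k ∧ ∀ j, height j < height k → IsTrivialAt e j

lemma exists_isFirstBad (h : ¬ IsSquarefreeOdd e) : ∃ k, IsFirstBad e k := by
  obtain ⟨k, hk, hmin⟩ := (measure height).wf.has_min {k | ¬ IsTrivialAt e k} (not_forall.1 h)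
  exact ⟨k, hk, fun j hj => by_contra fun hbad => hmin j hbad hj⟩

lemma IsFirstBad.height_le (hk : IsFirstBad e k) (hj : ¬ IsTrivialAt e j) :
    height k ≤ height j :=
  not_lt.1 fun hlt => hj (hk.2 j hlt)

lemma IsFirstBad.unique (hj : IsFirstBad e j) (hk : IsFirstBad e k) : j = k :=
  height_injective (le_antisymm (hj.height_le hk.1) (hk.height_le hj.1))

lemma IsFirstBad.not_isSquarefreeOdd (hk : IsFirstBad e k) : ¬ IsSquarefreeOdd e :=
  fun h => hk.1 (h k)

def oddDoubles (e : NZ →₀ ℕ) : Finset NZ :=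
  (e.support.preimage double double_injective.injOn).filter fun k => Odd (e (double k))

lemma mem_oddDoubles : k ∈ oddDoubles e ↔ Odd (e (double k)) := by
  simp only [oddDoubles, Finset.mem_filter, Finset.mem_preimage, Finsupp.mem_support_iff,
    and_iff_right_iff_imp]
  exact fun h => h.pos.ne'

lemma not_isTrivialAt_of_mem_oddDoubles (hk : k ∈ oddDoubles e) : ¬ IsTrivialAt e k :=
  fun h => Nat.not_even_iff_odd.2 (mem_oddDoubles.1 hk) h.2

lemma oddDoubles_eq_empty (he : IsSquarefreeOdd e) : oddDoubles e = ∅ :=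
  Finset.eq_empty_of_forall_notMem fun k hk => not_isTrivialAt_of_mem_oddDoubles hk (he k)

lemma IsFirstBad.lower (hk : IsFirstBad e k) (hj : j ∈ oddDoubles e) :
    IsFirstBad (lower e j) k := by
  have hkj : height k ≤ height j := hk.height_le (not_isTrivialAt_of_mem_oddDoubles hj)
  have hjd := height_lt_height_double j
  refine ⟨?_, fun i hi => ?_⟩
  · rcases eq_or_ne k j with rfl | hne
    · exact not_isTrivialAt_lower_self
    · rw [isTrivialAt_lower_iff hne fun h => by rw [h] at hkj; omega]
      exact hk.1
  · rw [isTrivialAt_lower_iff (fun h => by rw [h] at hi; omega) fun h => by rw [h] at hi; omega]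
    exact hk.2 i hi

lemma oddDoubles_raise (hk : 2 ≤ e k) (hev : Even (e (double k))) :
    oddDoubles (raise e k) = insert k (oddDoubles e) := by
  have := double_ne_self k
  ext j
  simp only [Finset.mem_insert, mem_oddDoubles, raise_apply]
  rcases eq_or_ne j k with rfl | hjk
  · grind
  · have := double_injective.ne hjk
    split_ifs <;> grind

end Exponents

def ofMonomials (F : (NZ →₀ ℕ) → Xpoly) : Xpoly →ₗ[ZMod 2] Xpoly :=
  (basisMonomials NZ (ZMod 2)).constr (ZMod 2) F

lemma ofMonomials_monomial (F : (NZ →₀ ℕ) → Xpoly) (e : NZ →₀ ℕ) :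
    ofMonomials F (monomial e 1) = F e := by
  have h := (basisMonomials NZ (ZMod 2)).constr_basis (ZMod 2) F e
  rwa [coe_basisMonomials] at h

open Classical in
def homotopyExp (e : NZ →₀ ℕ) : Xpoly :=
  if h : ∃ k, IsFirstBad e k then
    if Even (e (double h.choose)) then monomial (raise e h.choose) 1 else 0
  else 0

open Classical in
def projExp (e : NZ →₀ ℕ) : Xpoly := if IsSquarefreeOdd e then monomial e 1 else 0

def homotopy : Xpoly →ₗ[ZMod 2] Xpoly := ofMonomials homotopyExp

def proj : Xpoly →ₗ[ZMod 2] Xpoly := ofMonomials projExp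

lemma homotopyExp_of_isFirstBad {e : NZ →₀ ℕ} {k : NZ} (hk : IsFirstBad e k) :
    homotopyExp e = if Even (e (double k)) then monomial (raise e k) 1 else 0 := by
  have h : ∃ k, IsFirstBad e k := ⟨k, hk⟩
  rw [homotopyExp, dif_pos h, h.choose_spec.unique hk]

lemma homotopyExp_of_isSquarefreeOdd {e : NZ →₀ ℕ} (he : IsSquarefreeOdd e) :
    homotopyExp e = 0 := by
  rw [homotopyExp, dif_neg fun ⟨_, hk⟩ => hk.not_isSquarefreeOdd he]

lemma homotopyExp_lower {e : NZ →₀ ℕ} {j k : NZ} (hk : IsFirstBad e k) (hj : j ∈ oddDoubles e)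
    (hjk : j ≠ k) :
    homotopyExp (lower e j) =
      if Even (e (double k)) then monomial (raise (lower e j) k) 1 else 0 := by
  rw [homotopyExp_of_isFirstBad (hk.lower hj)]
  exact if_congr (even_lower_apply_double_iff hjk.symm) rfl rfl

def squarefreeOddSpan : Submodule (ZMod 2) Xpoly :=
  Submodule.span (ZMod 2) {p | ∃ e, IsSquarefreeOdd e ∧ p = monomial e 1}

lemma projExp_mem (e : NZ →₀ ℕ) : projExp e ∈ squarefreeOddSpan := by
  unfold projExp
  split_ifs with he
  · exact Submodule.subset_span ⟨e, he, rfl⟩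
  · exact zero_mem _

lemma proj_mem (p : Xpoly) : proj p ∈ squarefreeOddSpan := by
  induction p using MvPolynomial.induction_on' with
  | monomial e a =>
    rw [← mul_one a, ← smul_eq_mul, ← smul_monomial, map_smul, proj, ofMonomials_monomial]
    exact Submodule.smul_mem _ a (projExp_mem e)
  | add p q hp hq => exact map_add proj p q ▸ add_mem hp hq

lemma proj_eq_self {p : Xpoly} (hp : p ∈ squarefreeOddSpan) : proj p = p := by
  induction hp using Submodule.span_induction with
  | mem x hx =>
    obtain ⟨e, he, rfl⟩ := hx
    rw [proj, ofMonomials_monomial, projExp, if_pos he]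
  | zero => exact map_zero _
  | add x y _ _ hx hy => rw [map_add, hx, hy]
  | smul a x _ hx => rw [map_smul, hx]

def indexOne : NZ := ⟨1, one_ne_zero⟩

lemma xv_coe (i : NZ) : xv i = X i := by
  rw [xv, dif_pos i.2]

lemma xv_zero : xv 0 = 0 := dif_neg (not_not.2 rfl)

lemma xv_one : xv 1 = X indexOne := xv_coe indexOne

lemma isCleanExp_iff {e : NZ →₀ ℕ} : IsCleanExp e ↔ IsSquarefreeOdd e ∧ e indexOne = 0 := by
  rw [isSquarefreeOdd_iff]
  refine ⟨fun h => ⟨fun n => ⟨(h n).1, fun hn => ((h n).2 hn).1⟩, ?_⟩,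
    fun ⟨h, h1⟩ n => ⟨(h n).1, fun hn => ⟨(h n).2 hn, fun hn1 => ?_⟩⟩⟩
  · by_contra h1
    exact ((h indexOne).2 h1).2 rfl
  · rw [show n = indexOne from Subtype.ext hn1] at hn
    exact hn h1

lemma isSquarefreeOdd_single_one_add {e : NZ →₀ ℕ} (he : IsCleanExp e) :
    IsSquarefreeOdd (Finsupp.single indexOne 1 + e) := by
  rw [isCleanExp_iff, isSquarefreeOdd_iff] at he
  rw [isSquarefreeOdd_iff]
  intro n
  rcases eq_or_ne indexOne n with rfl | hn
  · simp only [Finsupp.add_apply, Finsupp.single_eq_same, he.2]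
    exact ⟨le_rfl, fun _ => odd_one⟩
  · simpa [Finsupp.single_apply, hn] using he.1 n

lemma isCleanExp_erase_one {e : NZ →₀ ℕ} (he : IsSquarefreeOdd e) :
    IsCleanExp (e.erase indexOne) := by
  rw [isSquarefreeOdd_iff] at he
  rw [isCleanExp_iff, isSquarefreeOdd_iff]
  refine ⟨fun n => ?_, Finsupp.erase_same⟩
  rcases eq_or_ne n indexOne with rfl | hn
  · simp
  · simpa [Finsupp.erase_ne hn] using he n

lemma cleanSpan_le : CleanSpan ≤ squarefreeOddSpan :=
  Submodule.span_mono fun _ ⟨e, he, hp⟩ => ⟨e, (isCleanExp_iff.1 he).1, hp⟩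

lemma xv_one_mul_mem {t : Xpoly} (ht : t ∈ CleanSpan) : xv 1 * t ∈ squarefreeOddSpan := by
  induction ht using Submodule.span_induction with
  | mem x hx =>
    obtain ⟨e, he, rfl⟩ := hx
    rw [xv_one, X, monomial_mul, one_mul]
    exact Submodule.subset_span ⟨_, isSquarefreeOdd_single_one_add he, rfl⟩
  | zero => rw [mul_zero]; exact zero_mem _
  | add x y _ _ hx hy => rw [mul_add]; exact add_mem hx hy
  | smul a x _ hx => rw [mul_smul_comm]; exact Submodule.smul_mem _ a hx

lemma squarefreeOddSpan_le :
    squarefreeOddSpan ≤ CleanSpan ⊔ CleanSpan.map (LinearMap.mulLeft (ZMod 2) (xv 1)) := by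
  refine Submodule.span_le.2 fun p ⟨e, he, hp⟩ => ?_
  subst hp
  by_cases h1 : e indexOne = 0
  · exact Submodule.mem_sup_left (Submodule.subset_span ⟨e, isCleanExp_iff.2 ⟨he, h1⟩, rfl⟩)
  · have h1 : e indexOne = 1 := by
      have := ((isSquarefreeOdd_iff.1 he) indexOne).1
      omega
    refine Submodule.mem_sup_right ⟨monomial (e.erase indexOne) 1,
      Submodule.subset_span ⟨_, isCleanExp_erase_one he, rfl⟩, ?_⟩
    rw [LinearMap.mulLeft_apply, xv_one, X, monomial_mul, one_mul, ← h1,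
      Finsupp.single_add_erase]

structure IsStandard (D : Derivation (ZMod 2) Xpoly Xpoly) : Prop where
  map_X_double (k : NZ) : D (X (double k)) = X k ^ 2
  map_X_of_odd (i : NZ) (hi : Odd (i : ℤ)) : D (X i) = 0

lemma isStandard_of_map_xv {D : Derivation (ZMod 2) Xpoly Xpoly}
    (heven : ∀ k : ℤ, k ≠ 0 → D (xv (2 * k)) = (xv k) ^ 2)
    (hodd : ∀ k : ℤ, D (xv (2 * k + 1)) = 0) : IsStandard D where
  map_X_double k := by
    rw [← xv_coe, ← xv_coe]
    exact heven k k.2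
  map_X_of_odd i hi := by
    obtain ⟨t, ht⟩ := hi
    rw [← xv_coe, ht]
    exact hodd t

namespace IsStandard

variable {D : Derivation (ZMod 2) Xpoly Xpoly} (hD : IsStandard D)
include hD

lemma map_X_eq_zero_of_notMem_range {i : NZ} (hi : i ∉ Set.range double) : D (X i) = 0 :=
  hD.map_X_of_odd i (Int.not_even_iff_odd.1 fun hev => hi (exists_double_eq hev))

lemma map_xv_two_mul (a : ℤ) : D (xv (2 * a)) = xv a ^ 2 := by
  by_cases ha : a = 0
  · simp [ha, xv_zero]
  · have h := hD.map_X_double ⟨a, ha⟩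
    rwa [← xv_coe, ← xv_coe] at h

lemma map_xv_two_mul_add_one (a : ℤ) : D (xv (2 * a + 1)) = 0 := by
  have h := hD.map_X_of_odd ⟨2 * a + 1, by omega⟩ (odd_two_mul_add_one a)
  rwa [← xv_coe] at h

lemma map_monomial (e : NZ →₀ ℕ) :
    D (monomial e 1) = ∑ k ∈ oddDoubles e, monomial (lower e k) 1 := by
  have hD' : D = mkDerivation (ZMod 2) fun i => D (X i) :=
    derivation_ext fun i => by rw [mkDerivation_X]
  rw [hD', mkDerivation_monomial, one_smul, Finsupp.sum, oddDoubles, Finset.sum_filter,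
    ← Finset.sum_preimage double e.support double_injective.injOn _
      fun i _ hi => by rw [hD.map_X_eq_zero_of_notMem_range hi, smul_zero]]
  refine Finset.sum_congr rfl fun k _ => ?_
  rw [hD.map_X_double, X_pow_eq_monomial, smul_eq_mul, monomial_mul, mul_one,
    CharTwo.natCast_eq_ite]
  by_cases h : Odd (e (double k))
  · rw [if_neg (Nat.not_even_iff_odd.2 h), if_pos h]
    rfl
  · rw [if_pos (Nat.not_odd_iff_even.1 h), if_neg h, monomial_zero]

lemma map_map_eq_zero (p : Xpoly) : D (D p) = 0 := by
  have hX : ∀ i, D (D (X i)) = 0 := by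
    intro i
    by_cases hi : i ∈ Set.range double
    · obtain ⟨k, rfl⟩ := hi
      rw [hD.map_X_double, Derivation.leibniz_pow, ZModModule.char_nsmul_eq_zero]
    · rw [hD.map_X_eq_zero_of_notMem_range hi, map_zero]
  induction p using MvPolynomial.induction_on with
  | C a => rw [derivation_C, map_zero]
  | add p q hp hq => rw [map_add, map_add, hp, hq, add_zero]
  | mul_X p i hp =>
    simp only [Derivation.leibniz, map_add, smul_eq_mul, hp, hX, mul_zero, zero_add]
    rw [mul_comm]
    exact ZModModule.add_self _

lemma homotopy_map_monomial (e : NZ →₀ ℕ) :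
    homotopy (D (monomial e 1)) = ∑ j ∈ oddDoubles e, homotopyExp (lower e j) := by
  rw [hD.map_monomial, map_sum]
  simp only [homotopy, ofMonomials_monomial]

lemma homotopy_comm_of_isSquarefreeOdd {e : NZ →₀ ℕ} (he : IsSquarefreeOdd e) :
    D (homotopyExp e) + homotopy (D (monomial e 1)) = monomial e 1 + projExp e := by
  rw [hD.homotopy_map_monomial, homotopyExp_of_isSquarefreeOdd he, oddDoubles_eq_empty he,
    projExp, if_pos he, map_zero, Finset.sum_empty, add_zero, ZModModule.add_self]

lemma homotopy_comm_of_even {e : NZ →₀ ℕ} {k : NZ} (hk : IsFirstBad e k)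
    (hev : Even (e (double k))) :
    D (homotopyExp e) + homotopy (D (monomial e 1)) = monomial e 1 + projExp e := by
  have h2 : 2 ≤ e k := by
    by_contra h
    exact hk.1 ⟨by omega, hev⟩
  have hkmem : k ∉ oddDoubles e := fun h => Nat.not_even_iff_odd.2 (mem_oddDoubles.1 h) hev
  have hlower : ∀ j ∈ oddDoubles e,
      homotopyExp (lower e j) = monomial (lower (raise e k) j) 1 := by
    intro j hj
    have hjk : j ≠ k := fun h => hkmem (h ▸ hj)
    have hkj : k ≠ double j := fun h => by
      have := hk.height_le (not_isTrivialAt_of_mem_oddDoubles hj)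
      have := height_lt_height_double j
      rw [h] at *
      omega
    rw [homotopyExp_lower hk hj hjk, if_pos hev, raise_lower_comm hjk hkj]
  rw [homotopyExp_of_isFirstBad hk, if_pos hev, hD.map_monomial, oddDoubles_raise h2 hev,
    Finset.sum_insert hkmem, lower_raise h2, hD.homotopy_map_monomial,
    Finset.sum_congr rfl hlower, projExp, if_neg hk.not_isSquarefreeOdd, add_zero, add_assoc,
    ZModModule.add_self, add_zero]

lemma homotopy_comm_of_odd {e : NZ →₀ ℕ} {k : NZ} (hk : IsFirstBad e k)
    (hodd : Odd (e (double k))) :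
    D (homotopyExp e) + homotopy (D (monomial e 1)) = monomial e 1 + projExp e := by
  have hev : ¬ Even (e (double k)) := Nat.not_even_iff_odd.2 hodd
  have hkmem : k ∈ oddDoubles e := mem_oddDoubles.2 hodd
  have hself : homotopyExp (lower e k) = monomial e 1 := by
    rw [homotopyExp_of_isFirstBad (hk.lower hkmem), if_pos, raise_lower hodd.pos]
    rw [lower_apply, if_pos rfl, if_neg (double_ne_self k).symm]
    obtain ⟨a, ha⟩ := hodd
    exact ⟨a, by omega⟩
  rw [homotopyExp_of_isFirstBad hk, if_neg hev, map_zero, zero_add, hD.homotopy_map_monomial,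
    Finset.sum_eq_single_of_mem k hkmem fun j hj hjk => by
      rw [homotopyExp_lower hk hj hjk, if_neg hev],
    hself, projExp, if_neg hk.not_isSquarefreeOdd, add_zero]

lemma homotopy_comm_monomial (e : NZ →₀ ℕ) :
    D (homotopyExp e) + homotopy (D (monomial e 1)) = monomial e 1 + projExp e := by
  by_cases he : IsSquarefreeOdd e
  · exact hD.homotopy_comm_of_isSquarefreeOdd he
  obtain ⟨k, hk⟩ := exists_isFirstBad he
  rcases Nat.even_or_odd (e (double k)) with hev | hodd
  · exact hD.homotopy_comm_of_even hk hev
  · exact hD.homotopy_comm_of_odd hk hodd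

lemma homotopy_comm (p : Xpoly) : D (homotopy p) + homotopy (D p) = p + proj p := by
  have h : (D : Xpoly →ₗ[ZMod 2] Xpoly) ∘ₗ homotopy + homotopy ∘ₗ (D : Xpoly →ₗ[ZMod 2] Xpoly) =
      LinearMap.id + proj := by
    refine MvPolynomial.linearMap_ext fun e => LinearMap.ext_ring ?_
    simpa [homotopy, proj, ofMonomials_monomial] using hD.homotopy_comm_monomial e
  simpa using LinearMap.congr_fun h p

lemma proj_map (p : Xpoly) : proj (D p) = 0 := by
  have h : proj ∘ₗ (D : Xpoly →ₗ[ZMod 2] Xpoly) = 0 := by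
    refine MvPolynomial.linearMap_ext fun e => LinearMap.ext_ring ?_
    simp only [LinearMap.comp_apply, Derivation.coeFn_coe, LinearMap.zero_apply,
      hD.map_monomial, map_sum, proj, ofMonomials_monomial]
    exact Finset.sum_eq_zero fun j _ => if_neg fun h => not_isTrivialAt_lower_self (h j)
  simpa using LinearMap.congr_fun h p

lemma map_eq_zero_of_mem {p : Xpoly} (hp : p ∈ squarefreeOddSpan) : D p = 0 := by
  induction hp using Submodule.span_induction with
  | mem x hx =>
    obtain ⟨e, he, rfl⟩ := hx
    rw [hD.map_monomial, oddDoubles_eq_empty he, Finset.sum_empty]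
  | zero => exact map_zero _
  | add x y _ _ hx hy => rw [map_add, hx, hy, add_zero]
  | smul a x _ hx => rw [Derivation.map_smul, hx, smul_zero]

lemma eq_proj_add_map {q : Xpoly} (hq : D q = 0) : q = proj q + D (homotopy q) := by
  have h := hD.homotopy_comm q
  rw [hq, map_zero, add_zero] at h
  rw [h, add_comm q, ← add_assoc, ZModModule.add_self, zero_add]

lemma exists_clean_decomposition {q : Xpoly} (hq : D q = 0) :
    ∃ c ∈ CleanSpan, ∃ t ∈ CleanSpan, ∃ r, q = c + xv 1 * t + D r := by
  obtain ⟨c, hc, _, ⟨t, ht, rfl⟩, hct⟩ :=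
    Submodule.mem_sup.1 (squarefreeOddSpan_le (proj_mem q))
  refine ⟨c, hc, t, ht, homotopy q, ?_⟩
  rw [← LinearMap.mulLeft_apply (R := ZMod 2), hct]
  exact hD.eq_proj_add_map hq

lemma eq_zero_of_xv_one_mul_eq_map {c t r w : Xpoly} (hc : c ∈ CleanSpan) (ht : t ∈ CleanSpan)
    (h : xv 1 * (c + xv 1 * t + D r) = D w) : c = 0 := by
  have hx1 : D (xv 1) = 0 := by simpa using hD.map_xv_two_mul_add_one 0
  have hx2 : D (xv 2) = xv 1 ^ 2 := by simpa using hD.map_xv_two_mul 1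
  have ht0 : D t = 0 := hD.map_eq_zero_of_mem (cleanSpan_le ht)
  have hb : xv 1 * c = D (w + xv 2 * t + xv 1 * r) := by
    simp only [map_add, Derivation.leibniz, smul_eq_mul, ← h, hx1, hx2, ht0]
    linear_combination (-(xv 1 * D r) - xv 1 ^ 2 * t) * (CharTwo.two_eq_zero : (2 : Xpoly) = 0)
  have h0 : xv 1 * c = 0 := by
    rw [← proj_eq_self (xv_one_mul_mem hc), hb, hD.proj_map]
  exact (mul_eq_zero.1 h0).resolve_left (by rw [xv_one]; exact X_ne_zero _)

lemma sum_Ioo_xv_mul_xv {i m : ℕ} (him : i < m) :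
    ∑ j ∈ Finset.Ioo i m, xv ((j : ℤ) - i) * xv ((m : ℤ) - j) = D (xv ((m : ℤ) - i)) := by
  set F : ℕ → Xpoly := fun j => xv ((j : ℤ) - i) * xv ((m : ℤ) - j) with hF
  -- the reflection `j ↦ m + i - j` pairs off equal terms, except for a middle one
  have hpair : ∀ s ⊆ Finset.Ioo i m, (∀ j ∈ s, m + i - j ∈ s) → (∀ j ∈ s, 2 * j ≠ m + i) →
      ∑ j ∈ s, F j = 0 := by
    intro s hs hrefl hmid
    refine Finset.sum_involution (fun j _ => m + i - j) (fun j hj => ?_)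
      (fun j hj _ => by have := hmid j hj; omega) hrefl
      (fun j hj => by have := Finset.mem_Ioo.1 (hs hj); omega)
    have := Finset.mem_Ioo.1 (hs hj)
    have hsymm : F (m + i - j) = F j := by
      simp only [hF]
      rw [mul_comm]
      congr 2 <;> omega
    rw [hsymm, ZModModule.add_self]
  rcases Nat.even_or_odd (m - i) with ⟨a, ha⟩ | ⟨a, ha⟩
  · have hmem : i + a ∈ Finset.Ioo i m := Finset.mem_Ioo.2 ⟨by omega, by omega⟩
    rw [← Finset.add_sum_erase _ _ hmem, hpair _ (Finset.erase_subset _ _), add_zero,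
      show (m : ℤ) - i = 2 * a by omega, hD.map_xv_two_mul, sq]
    · congr 2 <;> omega
    · intro j hj
      have := Finset.mem_Ioo.1 (Finset.mem_of_mem_erase hj)
      have := Finset.ne_of_mem_erase hj
      exact Finset.mem_erase.2 ⟨by omega, Finset.mem_Ioo.2 ⟨by omega, by omega⟩⟩
    · intro j hj
      have := Finset.ne_of_mem_erase hj
      omega
  · rw [hpair _ subset_rfl, show (m : ℤ) - i = 2 * a + 1 by omega, hD.map_xv_two_mul_add_one]
    · intro j hj
      have := Finset.mem_Ioo.1 hj
      exact Finset.mem_Ioo.2 ⟨by omega, by omega⟩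
    · intro j _
      omega

end IsStandard

section Complex

variable {D : Derivation (ZMod 2) Xpoly Xpoly} {dA : AX →ₗ[ZMod 2] AX}
  (hdA : ∀ (m : ℕ) (p : Xpoly), dA (Finsupp.single m p) =
    (∑ j ∈ Finset.range m, Finsupp.single j (xv (m - j : ℤ) * p)) + Finsupp.single m (D p))
include hdA

lemma dA_dA_single (hD : IsStandard D) (m : ℕ) (p : Xpoly) :
    dA (dA (Finsupp.single m p)) = 0 := by
  set B := ∑ j ∈ Finset.range m, Finsupp.single j (D (xv ((m : ℤ) - j)) * p)
  set C := ∑ j ∈ Finset.range m, Finsupp.single j (xv ((m : ℤ) - j) * D p)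
  have hleibniz : ∑ j ∈ Finset.range m, Finsupp.single j (D (xv ((m : ℤ) - j) * p)) = B + C := by
    simp only [B, C, ← Finset.sum_add_distrib, ← Finsupp.single_add, Derivation.leibniz,
      smul_eq_mul, add_comm, mul_comm p]
  have hswap : ∑ j ∈ Finset.range m, ∑ i ∈ Finset.range j,
      Finsupp.single i (xv ((j : ℤ) - i) * (xv ((m : ℤ) - j) * p)) = B := by
    rw [Finset.sum_comm' (t' := Finset.range m) (s' := fun i => Finset.Ioo i m)
      fun j i => by simp only [Finset.mem_range, Finset.mem_Ioo]; omega]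
    refine Finset.sum_congr rfl fun i hi => ?_
    simp only [← mul_assoc, ← Finsupp.single_finsetSum, ← Finset.sum_mul,
      hD.sum_Ioo_xv_mul_xv (Finset.mem_range.1 hi)]
  rw [hdA, map_add, map_sum, hdA, hD.map_map_eq_zero, Finsupp.single_zero, add_zero]
  simp only [hdA, Finset.sum_add_distrib, hswap, hleibniz]
  rw [← add_assoc, ZModModule.add_self, zero_add, ZModModule.add_self]

lemma dA_dA (hD : IsStandard D) (f : AX) : dA (dA f) = 0 := by
  induction f using Finsupp.induction_linear with
  | zero => rw [map_zero, map_zero]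
  | add f g hf hg => rw [map_add, map_add, hf, hg, add_zero]
  | single m p => exact dA_dA_single hdA hD m p

lemma dA_single_apply (m j : ℕ) (p : Xpoly) :
    dA (Finsupp.single m p) j =
      (if j < m then xv ((m : ℤ) - j) * p else 0) + if m = j then D p else 0 := by
  simp only [hdA, Finsupp.add_apply, Finsupp.finsetSum_apply, Finsupp.single_apply,
    Finset.sum_ite_eq', Finset.mem_range]

lemma dA_apply_of_eq_zero {f : AX} {j : ℕ} (hf : ∀ m, j + 1 < m → f m = 0) :
    dA f j = xv 1 * f (j + 1) + D (f j) := by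
  have hsum : dA f j = ∑ m ∈ f.support ∪ {j, j + 1}, dA (Finsupp.single m (f m)) j := by
    conv_lhs => rw [← Finsupp.sum_single f]
    rw [Finsupp.sum_of_support_subset f Finset.subset_union_left _
      fun _ _ => Finsupp.single_zero _, map_sum, Finsupp.finsetSum_apply]
  rw [hsum, ← Finset.sum_subset Finset.subset_union_right, Finset.sum_pair (by omega)]
  · simp [dA_single_apply hdA, add_comm]
  · intro m _ hm
    simp only [Finset.mem_insert, Finset.mem_singleton, not_or] at hm
    rw [dA_single_apply hdA, if_neg hm.1]
    split_ifs with h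
    · rw [hf m (by omega), mul_zero, add_zero]
    · rw [add_zero]

lemma add_dA_apply_of_le (hD : IsStandard D) {f : AX} {N : ℕ} (hN : ∀ m, N < m → f m = 0)
    {c t r : Xpoly} (ht : t ∈ CleanSpan) (hfN : f N = c + xv 1 * t + D r) {m : ℕ} (hm : N ≤ m) :
    (f + dA (Finsupp.single (N + 1) t + Finsupp.single N r)) m = if m = N then c else 0 := by
  have hg : ∀ k, m + 1 < k → (Finsupp.single (N + 1) t + Finsupp.single N r) k = 0 := by
    intro k hk
    simp only [Finsupp.add_apply, Finsupp.single_apply]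
    rw [if_neg (by omega), if_neg (by omega), add_zero]
  rw [Finsupp.add_apply, dA_apply_of_eq_zero hdA hg]
  simp only [Finsupp.add_apply, Finsupp.single_apply]
  rcases hm.eq_or_lt with rfl | hlt
  · simp only [show N + 1 ≠ N by omega, show N ≠ N + 1 by omega, ↓reduceIte, add_zero,
      zero_add, hfN]
    rw [add_assoc c, add_assoc, ZModModule.add_self, add_zero]
  · simp only [hN m hlt, show N + 1 ≠ m + 1 by omega, show N ≠ m + 1 by omega,
      show N ≠ m by omega, show m ≠ N by omega, ↓reduceIte, add_zero, mul_zero, zero_add]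
    split_ifs
    exacts [hD.map_eq_zero_of_mem (cleanSpan_le ht), map_zero D]

lemma map_apply_eq_zero_of_top {f : AX} (hf : dA f = 0) {N : ℕ} (hN : ∀ m, N < m → f m = 0) :
    D (f N) = 0 := by
  have h := dA_apply_of_eq_zero hdA (j := N) fun m hm => hN m (by omega)
  rwa [hf, hN (N + 1) (by omega), mul_zero, zero_add, Finsupp.zero_apply, eq_comm] at h

lemma xv_one_mul_apply_eq_map {f : AX} (hf : dA f = 0) {n : ℕ} (hn : ∀ m, n + 1 < m → f m = 0) :
    xv 1 * f (n + 1) = D (f n) := by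
  have h := dA_apply_of_eq_zero hdA hn
  rw [hf, Finsupp.zero_apply, eq_comm] at h
  rwa [← sub_eq_zero, ZModModule.sub_eq_add]

lemma exists_clean_homologous (hD : IsStandard D) {N : ℕ} {f : AX} (hf : dA f = 0)
    (hN : ∀ m, N < m → f m = 0) :
    ∃ p ∈ CleanSpan, ∃ g : AX, f = Finsupp.single 0 p + dA g := by
  induction N generalizing f with
  | zero =>
    obtain ⟨c, hc, t, ht, r, hq⟩ :=
      hD.exists_clean_decomposition (map_apply_eq_zero_of_top hdA hf hN)
    refine ⟨c, hc, Finsupp.single 1 t + Finsupp.single 0 r, ?_⟩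
    have hreduced : f + dA (Finsupp.single 1 t + Finsupp.single 0 r) = Finsupp.single 0 c := by
      ext m
      rw [add_dA_apply_of_le hdA hD hN ht hq (Nat.zero_le m), Finsupp.single_apply]
      simp only [eq_comm]
    rw [← hreduced, add_assoc, ZModModule.add_self, add_zero]
  | succ n ih =>
    obtain ⟨c, hc, t, ht, r, hq⟩ :=
      hD.exists_clean_decomposition (map_apply_eq_zero_of_top hdA hf hN)
    have hc0 : c = 0 :=
      hD.eq_zero_of_xv_one_mul_eq_map hc ht (hq ▸ xv_one_mul_apply_eq_map hdA hf hN)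
    set g := Finsupp.single (n + 2) t + Finsupp.single (n + 1) r
    obtain ⟨p, hp, g', hg'⟩ := ih (f := f + dA g) (by rw [map_add, hf, dA_dA hdA hD, add_zero])
      fun m hm => by rw [add_dA_apply_of_le hdA hD hN ht hq hm, hc0, ite_self]
    refine ⟨p, hp, g' + g, ?_⟩
    rw [map_add, ← add_assoc, ← hg', add_assoc, ZModModule.add_self, add_zero]

end Complex

end CleanCycles

end

/-- In the chain complex `A_+ ⊗ X` (Leibniz rule and
`∂ a_{n-1/2} = Σ_{i=1}^{n-1} a_{i-1/2} x_{n-i}`), every cycle `f` is homologous to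
`a_{1/2} · p` with `p` a clean polynomial: `f = a_{1/2} p + ∂ g`. -/
theorem stmt14 (D : Derivation (ZMod 2) Xpoly Xpoly)
    (heven : ∀ k : ℤ, k ≠ 0 → D (xv (2 * k)) = (xv k) ^ 2)
    (hodd : ∀ k : ℤ, D (xv (2 * k + 1)) = 0)
    (dA : AX →ₗ[ZMod 2] AX)
    (hdA : ∀ (m : ℕ) (p : Xpoly), dA (Finsupp.single m p) =
      (∑ j ∈ Finset.range m, Finsupp.single j (xv (m - j : ℤ) * p)) +
        Finsupp.single m (D p)) :
    ∀ f : AX, dA f = 0 →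
      ∃ p ∈ CleanSpan, ∃ g : AX, f = Finsupp.single 0 p + dA g := by
  intro f hf
  refine CleanCycles.exists_clean_homologous hdA (CleanCycles.isStandard_of_map_xv heven hodd)
    (N := f.support.sup id) hf fun m hm => ?_
  by_contra h
  exact (Finset.le_sup (f := id) (Finsupp.mem_support_iff.2 h)).not_gt hm
end

section
/- In the chain complex C ⊗ X (free X-module on symbols c_n, n ∈ Z) with differential ∂(c_n x^e) = c_n (∂ x^e) + Σ_{i ∈ Z\{0\}} i·e_i · c_{n+i} x_i^{-1} x^e (mod 2), the operator α_{(j,0)}^* defined by α_{(j,0)}^*(c_n x^e) = c_{n-j} x_j x^e for odd j satisfies ∂ α_{(j,0)}^* + α_{(j,0)}^* ∂ = 1. Consequently the homology of (C ⊗ X, ∂) is zero. -/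
open MvPolynomial

/-- `C ⊗ X`, the free `X`-module with basis `{c_n : n ∈ ℤ}`. -/
abbrev CX := ℤ →₀ Xpoly

/-!
Multiplication by the odd variable `x_j` commutes with the polynomial part of `∂`, since
`∂ x_j = 0`, and it leaves the summands `i e_i c_{n+i} x_i⁻¹ x^e` with `i ≠ j` unchanged up to
the shift `c_n ↦ c_{n-j}`. So in `∂ α^* + α^* ∂` everything cancels mod 2 except the two
`i = j` summands, whose coefficients `j (e_j + 1)` and `j e_j` add up to the odd number
`j (2 e_j + 1)`; they give back `c_n x^e`.
-/

theorem ker_le_range_of_homotopy_id {R M : Type*} [Semiring R] [AddCommMonoid M] [Module R M]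
    {d K : M →ₗ[R] M} (h : d ∘ₗ K + K ∘ₗ d = LinearMap.id) :
    LinearMap.ker d ≤ LinearMap.range d :=
  fun f hf => ⟨K f, by simpa [LinearMap.mem_ker.mp hf] using LinearMap.congr_fun h f⟩

theorem X_mul_monomial_one {σ R : Type*} [CommSemiring R] (a : σ) (e : σ →₀ ℕ) :
    (X a : MvPolynomial σ R) * monomial e 1 = monomial (e + Finsupp.single a 1) 1 := by
  rw [add_comm, monomial_single_add, pow_one]

theorem Finsupp.mvPolynomial_lhom_ext {ι σ R M : Type*} [CommSemiring R] [AddCommMonoid M]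
    [Module R M] {φ ψ : (ι →₀ MvPolynomial σ R) →ₗ[R] M}
    (h : ∀ n e, φ (Finsupp.single n (monomial e 1)) = ψ (Finsupp.single n (monomial e 1))) :
    φ = ψ :=
  Finsupp.lhom_ext' fun n => MvPolynomial.linearMap_ext fun e => LinearMap.ext_ring (h n e)

theorem Derivation.map_monomial_add_single {σ R : Type*} [CommRing R]
    (D : Derivation R (MvPolynomial σ R) (MvPolynomial σ R)) {a : σ} (hDa : D (X a) = 0)
    (e : σ →₀ ℕ) : D (monomial (e + Finsupp.single a 1) 1) = X a * D (monomial e 1) := by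
  rw [← X_mul_monomial_one, D.leibniz, hDa, smul_zero, add_zero, smul_eq_mul]

namespace CX

open Finsupp

/-- The operator `α_{(a,0)}^*` of the paper: `c_n p ↦ c_{n-a} x_a p`. -/
noncomputable def alphaStar (a : NZ) : CX →ₗ[ZMod 2] CX :=
  lmapDomain Xpoly (ZMod 2) (· - (a : ℤ)) ∘ₗ mapRange.linearMap (LinearMap.mulLeft (ZMod 2) (X a))

@[simp]
theorem alphaStar_single (a : NZ) (n : ℤ) (p : Xpoly) :
    alphaStar a (single n p) = single (n - a) (X a * p) := by
  simp only [alphaStar, LinearMap.comp_apply, mapRange.linearMap_apply, mapRange_single,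
    LinearMap.mulLeft_apply, lmapDomain_apply, mapDomain_single]

/-- The summand `i e_i c_{n+i} x_i⁻¹ x^e` of `∂(c_n x^e)`; when `e_i = 0` the coefficient
vanishes, so the truncated `e_i - 1` does no harm. -/
noncomputable def partialTerm (n : ℤ) (e : NZ →₀ ℕ) (i : NZ) : CX :=
  (((i : ℤ) * (e i : ℤ) : ℤ) : ZMod 2) • single (n + i) (monomial (e.update i (e i - 1)) 1)

theorem partialTerm_of_apply_eq_zero {n : ℤ} {e : NZ →₀ ℕ} {i : NZ} (h : e i = 0) :
    partialTerm n e i = 0 := by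
  simp [partialTerm, h]

theorem partialTerm_add_single_of_ne {a i : NZ} (h : i ≠ a) (n : ℤ) (e : NZ →₀ ℕ) :
    partialTerm (n - a) (e + single a 1) i = alphaStar a (partialTerm n e i) := by
  have hupd : (e + single a 1).update i (e i - 1) = e.update i (e i - 1) + single a 1 := by
    rw [update_eq_erase_add_single, erase_add, erase_single_ne h, update_eq_erase_add_single]
    abel
  have happ : (e + single a 1 : NZ →₀ ℕ) i = e i := by simp [Ne.symm h]
  rw [partialTerm, partialTerm, map_smul, alphaStar_single, X_mul_monomial_one, happ, hupd,
    sub_add_eq_add_sub]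

theorem partialTerm_add_single_self (a : NZ) (n : ℤ) (e : NZ →₀ ℕ) :
    partialTerm (n - a) (e + single a 1) a =
      (((a : ℤ) * ((e a + 1 : ℕ) : ℤ) : ℤ) : ZMod 2) • single n (monomial e 1) := by
  have happ : (e + single a 1 : NZ →₀ ℕ) a = e a + 1 := by simp
  have hupd : (e + single a 1).update a (e a) = e := by
    rw [update_eq_erase_add_single, erase_add, erase_single, add_zero,
      ← update_eq_erase_add_single, update_self]
  rw [partialTerm, happ, Nat.add_sub_cancel, hupd, sub_add_cancel]

theorem alphaStar_partialTerm_self (a : NZ) (n : ℤ) (e : NZ →₀ ℕ) :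
    alphaStar a (partialTerm n e a) =
      (((a : ℤ) * (e a : ℤ) : ℤ) : ZMod 2) • single n (monomial e 1) := by
  rcases Nat.eq_zero_or_pos (e a) with h | h
  · simp [partialTerm, h]
  · rw [partialTerm, map_smul, alphaStar_single, X_mul_monomial_one, update_eq_erase_add_single,
      add_assoc, ← single_add, Nat.sub_add_cancel h, ← update_eq_erase_add_single, update_self,
      add_sub_cancel_right]

theorem partialTerm_add_single_self_add_alphaStar {a : NZ} (ha : Odd (a : ℤ)) (n : ℤ)
    (e : NZ →₀ ℕ) :
    partialTerm (n - a) (e + single a 1) a + alphaStar a (partialTerm n e a) =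
      single n (monomial e 1) := by
  rw [partialTerm_add_single_self, alphaStar_partialTerm_self, ← add_smul]
  convert one_smul (ZMod 2) _
  push_cast
  rw [ha.intCast_zmod_two]
  have two_eq_zero : (2 : ZMod 2) = 0 := rfl
  linear_combination (e a : ZMod 2) * two_eq_zero

theorem dC_alphaStar_add_alphaStar_dC_single (D : Derivation (ZMod 2) Xpoly Xpoly)
    (dC : CX →ₗ[ZMod 2] CX)
    (hdC : ∀ (n : ℤ) (e : NZ →₀ ℕ), dC (single n (monomial e 1)) =
      single n (D (monomial e 1)) + ∑ i ∈ e.support, partialTerm n e i)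
    {a : NZ} (ha : Odd (a : ℤ)) (hDa : D (X a) = 0) (n : ℤ) (e : NZ →₀ ℕ) :
    dC (alphaStar a (single n (monomial e 1))) + alphaStar a (dC (single n (monomial e 1))) =
      single n (monomial e 1) := by
  classical
  have sum_eq_sum_insert : ∀ (m : ℤ) (f : NZ →₀ ℕ), f.support ⊆ insert a e.support →
      ∑ i ∈ f.support, partialTerm m f i = ∑ i ∈ insert a e.support, partialTerm m f i :=
    fun m f hf => Finset.sum_subset hf fun i _ hi =>
      partialTerm_of_apply_eq_zero (notMem_support_iff.mp hi)
  have hsupp : (e + single a 1).support ⊆ insert a e.support := by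
    rw [support_add_eq_union, Finset.union_comm, support_single a one_ne_zero,
      ← Finset.insert_eq]
  rw [alphaStar_single, X_mul_monomial_one, hdC, hdC, map_add, alphaStar_single,
    D.map_monomial_add_single hDa, add_add_add_comm, ZModModule.add_self, zero_add,
    sum_eq_sum_insert _ _ hsupp, sum_eq_sum_insert _ _ (Finset.subset_insert _ _), map_sum,
    ← Finset.sum_add_distrib, Finset.sum_eq_single_of_mem a (Finset.mem_insert_self _ _),
    partialTerm_add_single_self_add_alphaStar ha]
  intro i _ hi
  rw [partialTerm_add_single_of_ne hi, ZModModule.add_self]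

end CX

theorem stmt16_general (D : Derivation (ZMod 2) Xpoly Xpoly)
    (hodd : ∀ k : ℤ, D (xv (2 * k + 1)) = 0)
    (dC : CX →ₗ[ZMod 2] CX)
    (hdC : ∀ (n : ℤ) (e : NZ →₀ ℕ), dC (Finsupp.single n (monomial e 1)) =
      Finsupp.single n (D (monomial e 1)) +
        ∑ i ∈ e.support, (((i : ℤ) * (e i : ℤ) : ℤ) : ZMod 2) •
          Finsupp.single (n + (i : ℤ)) (monomial (e.update i (e i - 1)) (1 : ZMod 2)))
    (j : ℤ) (hj : Odd j)
    (K : CX →ₗ[ZMod 2] CX)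
    (hK : ∀ (n : ℤ) (e : NZ →₀ ℕ), K (Finsupp.single n (monomial e 1)) =
      Finsupp.single (n - j) (xv j * monomial e 1)) :
    (∀ f : CX, dC (K f) + K (dC f) = f) ∧
    (∀ f : CX, dC f = 0 → ∃ g : CX, f = dC g) := by
  obtain ⟨a, rfl⟩ : ∃ a : NZ, (a : ℤ) = j := ⟨⟨j, by rintro rfl; simp at hj⟩, rfl⟩
  have hxa : xv a = X a := dif_pos a.2
  have hDa : D (X a) = 0 := by
    obtain ⟨k, hk⟩ := hj
    rw [← hxa, hk]
    exact hodd k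
  obtain rfl : K = CX.alphaStar a :=
    Finsupp.mvPolynomial_lhom_ext fun n e => by rw [hK, CX.alphaStar_single, hxa]
  have homotopy : dC ∘ₗ CX.alphaStar a + CX.alphaStar a ∘ₗ dC = LinearMap.id :=
    Finsupp.mvPolynomial_lhom_ext (CX.dC_alphaStar_add_alphaStar_dC_single D dC hdC hj hDa)
  exact ⟨LinearMap.congr_fun homotopy, fun f hf =>
    (ker_le_range_of_homotopy_id homotopy hf).imp fun _ hg => hg.symm⟩

/-- In the chain complex `C ⊗ X`, with differential
`∂(c_n x^e) = c_n (∂ x^e) + Σ_i i e_i c_{n+i} x_i⁻¹ x^e` (mod 2), the source operator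
`α_{(j,0)}^*` with `α_{(j,0)}^*(c_n x^e) = c_{n-j} x_j x^e`, for odd `j`, satisfies
`∂ α_{(j,0)}^* + α_{(j,0)}^* ∂ = 1`.  Consequently the homology of `(C ⊗ X, ∂)` is
zero. -/
theorem stmt16 (D : Derivation (ZMod 2) Xpoly Xpoly)
    (heven : ∀ k : ℤ, k ≠ 0 → D (xv (2 * k)) = (xv k) ^ 2)
    (hodd : ∀ k : ℤ, D (xv (2 * k + 1)) = 0)
    (dC : CX →ₗ[ZMod 2] CX)
    (hdC : ∀ (n : ℤ) (e : NZ →₀ ℕ), dC (Finsupp.single n (monomial e 1)) =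
      Finsupp.single n (D (monomial e 1)) +
        ∑ i ∈ e.support, (((i : ℤ) * (e i : ℤ) : ℤ) : ZMod 2) •
          Finsupp.single (n + (i : ℤ)) (monomial (e.update i (e i - 1)) (1 : ZMod 2)))
    (j : ℤ) (hj : Odd j)
    (K : CX →ₗ[ZMod 2] CX)
    (hK : ∀ (n : ℤ) (e : NZ →₀ ℕ), K (Finsupp.single n (monomial e 1)) =
      Finsupp.single (n - j) (xv j * monomial e 1)) :
    (∀ f : CX, dC (K f) + K (dC f) = f) ∧
    (∀ f : CX, dC f = 0 → ∃ g : CX, f = dC g) :=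
  stmt16_general D hodd dC hdC j hj K hK
end

section
/- In the insular complex A_+ ⊗ X ⊗ B_+, for n ≥ 1 let s_n = Σ_{k+l=n, k,l>0} a_{k-1/2} b_{l-1/2} and let h = Σ_m a_{1/2+2m} b_{n+1/2-2m} (sum over m ≥ 0 with both indices positive). Then ∂h = x_1 s_n + x_3 s_{n-2} + x_5 s_{n-4} + ··· (sum over odd j ≥ 1 with n-j+1 ≥ 1 of x_j s_{n-j+1}). Consequently in homology, x̄_1 s̄_n = Σ_{k≥1} x̄_{2k+1} s̄_{n-2k}. -/
open MvPolynomial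

/-- `A_+ ⊗ X ⊗ B_+`, the free `X`-module with basis `a_i b_j` over positive half-integers
`i, j`; the index `(m, k) : ℕ × ℕ` stands for `a_{m+1/2} b_{k+1/2}`. -/
abbrev ABX := (ℕ × ℕ) →₀ Xpoly

/-- `s_n = Σ_{k+l=n, k,l>0} a_{k-1/2} b_{l-1/2}`: in our indexing,
`s_n = Σ_{i=0}^{n-1} a_{i+1/2} b_{(n-1-i)+1/2}`. -/
noncomputable def sN (n : ℕ) : ABX :=
  ∑ i ∈ Finset.range n, Finsupp.single (i, n - 1 - i) (1 : Xpoly)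

/-! Compare coefficients at `a_{p+1/2} b_{q+1/2}`. Both sides vanish there unless `p + q < n`,
and then the coefficient is a multiple of `x_{n-p-q}`. In `∂h` that monomial comes from the
summand `a_{2m+1/2} b_{n-2m+1/2}` by lowering the `a`-index exactly when `n - q` is even, and by
lowering the `b`-index exactly when `p` is even. Mod 2 the two contributions cancel unless exactly
one occurs, i.e. unless `n - p - q` is odd, which is where `Σ_k x_{2k+1} s_{n-2k}` is supported.
The boundary claim is the same identity with the `k = 0` term split off. -/

open Finset

theorem Finset.sum_ite_of_unique {ι M : Type*} [AddCommMonoid M] {s : Finset ι} {P : ι → Prop}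
    [DecidablePred P] {Q : Prop} [Decidable Q] {i : ι} {f : ι → M} {c : M}
    (hP : ∀ m ∈ s, P m ↔ Q ∧ m = i) (hi : Q → i ∈ s) (hf : ∀ m ∈ s, P m → f m = c) :
    ∑ m ∈ s, (if P m then f m else 0) = if Q then c else 0 := by
  split_ifs with hQ
  · have hPi : P i := (hP i (hi hQ)).2 ⟨hQ, rfl⟩
    rw [sum_eq_single_of_mem i (hi hQ) fun m hm hne => if_neg fun h => hne ((hP m hm).1 h).2,
      if_pos hPi, hf i (hi hQ) hPi]
  · exact sum_eq_zero fun m hm => if_neg fun h => hQ ((hP m hm).1 h).1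

theorem CharTwo.ite_and_add_ite_and {R : Type*} [Ring R] [CharP R 2] (A B C : Prop)
    [Decidable A] [Decidable B] [Decidable C] (x : R) :
    ((if A ∧ B then x else 0) + if A ∧ C then x else 0) = if A ∧ ¬(B ↔ C) then x else 0 := by
  by_cases A <;> by_cases B <;> by_cases C <;> simp_all [CharTwo.add_self_eq_zero]

lemma sN_apply (N p q : ℕ) : sN N (p, q) = if p + q + 1 = N then 1 else 0 := by
  simp only [sN, Finsupp.finsetSum_apply, Finsupp.single_apply, Prod.mk.injEq]
  exact sum_ite_of_unique (i := p) (fun m hm => by rw [mem_range] at hm; omega)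
    (fun h => mem_range.2 (by omega)) fun _ _ _ => rfl

lemma sum_xv_smul_sN_apply (n p q : ℕ) :
    (∑ k ∈ range ((n + 1) / 2), xv (2 * k + 1) • sN (n - 2 * k)) (p, q) =
      if p + q < n ∧ (n + p + q) % 2 = 1 then xv (n - p - q) else 0 := by
  simp only [Finsupp.finsetSum_apply, Finsupp.smul_apply, sN_apply, smul_eq_mul, mul_ite,
    mul_one, mul_zero]
  refine sum_ite_of_unique (i := (n - p - q - 1) / 2) (fun m hm => by rw [mem_range] at hm; omega)
    (fun h => mem_range.2 (by omega)) fun m _ h => congrArg xv (by omega)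

section

variable {D : Derivation (ZMod 2) Xpoly Xpoly} {dAB : ABX →ₗ[ZMod 2] ABX}

lemma dAB_single_one_apply
    (hdAB : ∀ (m k : ℕ) (p : Xpoly), dAB (Finsupp.single (m, k) p) =
      (∑ j ∈ Finset.range m, Finsupp.single (j, k) (xv (m - j : ℤ) * p)) +
      (∑ j ∈ Finset.range k, Finsupp.single (m, j) (xv (k - j : ℤ) * p)) +
      Finsupp.single (m, k) (D p)) (m k p q : ℕ) :
    dAB (Finsupp.single (m, k) 1) (p, q) =
      (if p < m ∧ q = k then xv (m - p) else 0) + if p = m ∧ q < k then xv (k - q) else 0 := by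
  simp only [hdAB, D.map_one_eq_zero, Finsupp.single_zero, add_zero, mul_one, Finsupp.add_apply,
    Finsupp.finsetSum_apply, Finsupp.single_apply, Prod.mk.injEq]
  congr 1
  · exact sum_ite_of_unique (i := p) (fun j hj => by rw [mem_range] at hj; omega)
      (fun h => mem_range.2 h.1) fun j _ h => by rw [h.1]
  · exact sum_ite_of_unique (i := q) (fun j hj => by rw [mem_range] at hj; omega)
      (fun h => mem_range.2 h.2) fun j _ h => by rw [h.2]

lemma dAB_sum_single_even_apply
    (hdAB : ∀ (m k : ℕ) (p : Xpoly), dAB (Finsupp.single (m, k) p) =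
      (∑ j ∈ Finset.range m, Finsupp.single (j, k) (xv (m - j : ℤ) * p)) +
      (∑ j ∈ Finset.range k, Finsupp.single (m, j) (xv (k - j : ℤ) * p)) +
      Finsupp.single (m, k) (D p)) (n p q : ℕ) :
    dAB (∑ m ∈ range (n / 2 + 1), Finsupp.single (2 * m, n - 2 * m) 1) (p, q) =
      (if p + q < n ∧ (n + q) % 2 = 0 then xv (n - p - q) else 0) +
        if p + q < n ∧ p % 2 = 0 then xv (n - p - q) else 0 := by
  simp only [map_sum, Finsupp.finsetSum_apply, dAB_single_one_apply hdAB, sum_add_distrib]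
  congr 1
  · exact sum_ite_of_unique (i := (n - q) / 2) (fun m hm => by rw [mem_range] at hm; omega)
      (fun h => mem_range.2 (by omega)) fun m hm h => by
        rw [mem_range] at hm
        exact congrArg xv (by omega)
  · exact sum_ite_of_unique (i := p / 2) (fun m hm => by rw [mem_range] at hm; omega)
      (fun h => mem_range.2 (by omega)) fun m _ h => congrArg xv (by omega)

end

theorem stmt19_general (n : ℕ) (hn : 1 ≤ n)
    (D : Derivation (ZMod 2) Xpoly Xpoly)
    (dAB : ABX →ₗ[ZMod 2] ABX)
    (hdAB : ∀ (m k : ℕ) (p : Xpoly), dAB (Finsupp.single (m, k) p) =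
      (∑ j ∈ Finset.range m, Finsupp.single (j, k) (xv (m - j : ℤ) * p)) +
      (∑ j ∈ Finset.range k, Finsupp.single (m, j) (xv (k - j : ℤ) * p)) +
      Finsupp.single (m, k) (D p)) :
    dAB (∑ m ∈ Finset.range (n / 2 + 1), Finsupp.single (2 * m, n - 2 * m) (1 : Xpoly)) =
      ∑ k ∈ Finset.range ((n + 1) / 2), xv (2 * k + 1) • sN (n - 2 * k) ∧
    ∃ g : ABX,
      xv 1 • sN n + ∑ k ∈ Finset.Ico 1 ((n + 1) / 2), xv (2 * k + 1) • sN (n - 2 * k) =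
        dAB g := by
  have hboundary : dAB (∑ m ∈ range (n / 2 + 1), Finsupp.single (2 * m, n - 2 * m) 1) =
      ∑ k ∈ range ((n + 1) / 2), xv (2 * k + 1) • sN (n - 2 * k) := by
    ext ⟨p, q⟩ : 1
    rw [dAB_sum_single_even_apply hdAB, CharTwo.ite_and_add_ite_and, sum_xv_smul_sN_apply]
    congr 1
    exact propext (by omega)
  refine ⟨hboundary, _, Eq.trans ?_ hboundary.symm⟩
  rw [sum_range_eq_add_Ico _ (show 0 < (n + 1) / 2 by omega)]
  norm_num

/-- In the insular complex `A_+ ⊗ X ⊗ B_+` (Leibniz differential with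
`∂ a_{n-1/2} = Σ a_{i-1/2} x_{n-i}`, `∂ b_{n-1/2} = Σ b_{i-1/2} x_{n-i}`), for `n ≥ 1`
the element `h = Σ_m a_{1/2+2m} b_{n+1/2-2m}` (over `m ≥ 0` with both indices positive)
satisfies `∂h = x_1 s_n + x_3 s_{n-2} + x_5 s_{n-4} + ⋯`; consequently
`x_1 s_n + Σ_{k≥1} x_{2k+1} s_{n-2k}` is a boundary, i.e. in homology
`x̄_1 s̄_n = Σ_{k≥1} x̄_{2k+1} s̄_{n-2k}`. -/
theorem stmt19 (n : ℕ) (hn : 1 ≤ n)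
    (D : Derivation (ZMod 2) Xpoly Xpoly)
    (heven : ∀ k : ℤ, k ≠ 0 → D (xv (2 * k)) = (xv k) ^ 2)
    (hodd : ∀ k : ℤ, D (xv (2 * k + 1)) = 0)
    (dAB : ABX →ₗ[ZMod 2] ABX)
    (hdAB : ∀ (m k : ℕ) (p : Xpoly), dAB (Finsupp.single (m, k) p) =
      (∑ j ∈ Finset.range m, Finsupp.single (j, k) (xv (m - j : ℤ) * p)) +
      (∑ j ∈ Finset.range k, Finsupp.single (m, j) (xv (k - j : ℤ) * p)) +
      Finsupp.single (m, k) (D p)) :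
    dAB (∑ m ∈ Finset.range (n / 2 + 1), Finsupp.single (2 * m, n - 2 * m) (1 : Xpoly)) =
      ∑ k ∈ Finset.range ((n + 1) / 2), xv (2 * k + 1) • sN (n - 2 * k) ∧
    ∃ g : ABX,
      xv 1 • sN n + ∑ k ∈ Finset.Ico 1 ((n + 1) / 2), xv (2 * k + 1) • sN (n - 2 * k) =
        dAB g :=
  stmt19_general n hn D dAB hdAB
end
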